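/- arXiv:1912.07107 — 8 statements merged into one kernel-verified Lean document; each statement's English description precedes it below -/
import Mathlib

section
/- For any positive semidefinite Σ, the kernel of the Riccati update 𝒯_q(Σ) = Ξ(Σ) − Ξ(Σ)C_qᵀ(C_q Ξ(Σ) C_qᵀ + F_q F_qᵀ)⁻¹ C_q Ξ(Σ) equals the kernel of Ξ(Σ), which in turn equals ker(Σ Aᵀ) ∩ ker(Dᵀ). -/
/-!
The kernel of a sum of positive semidefinite matrices is the intersection of their kernels, and
for `P ⪰ 0` the kernel of `B P Bᴴ` is `{x | P Bᴴ x = 0}`. Applied to `Ξ = DDᵀ + AΣAᵀ` this gives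
the second equality. Applied to the Joseph form `𝒯 = (I - KC) Ξ (I - KC)ᴴ + K FFᵀ Kᴴ`, it shows
that `x ∈ ker 𝒯` forces `Kᴴ x = 0` (as `FFᵀ ≻ 0`), hence `Ξ x = Ξ (I - KC)ᴴ x = 0`; conversely
`ker Ξ ⊆ ker 𝒯` is read off `𝒯 = Ξ - KCΞ`.
-/

open Matrix

open scoped ComplexOrder

namespace Matrix

variable {m n : Type*} [Fintype m] [Fintype n]

section Joseph

variable {R : Type*} [CommRing R] [StarRing R] [DecidableEq n]

theorem sub_mul_mul_eq_josephForm {Xi : Matrix n n R} {C : Matrix m n R} {W : Matrix m m R}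
    {K : Matrix n m R} (hK : K * (C * Xi * Cᴴ + W) = Xi * Cᴴ) :
    Xi - K * C * Xi = (1 - K * C) * Xi * (1 - K * C)ᴴ + K * W * Kᴴ := by
  calc Xi - K * C * Xi = Xi - K * C * Xi - Xi * Cᴴ * Kᴴ + K * (C * Xi * Cᴴ + W) * Kᴴ := by
        rw [hK, sub_add_cancel]
    _ = (1 - K * C) * Xi * (1 - K * C)ᴴ + K * W * Kᴴ := by
        rw [conjTranspose_sub, conjTranspose_one, conjTranspose_mul]
        simp only [Matrix.mul_add, Matrix.add_mul, Matrix.mul_sub, Matrix.sub_mul, Matrix.mul_one,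
          Matrix.one_mul, Matrix.mul_assoc]
        abel

end Joseph

variable {𝕜 : Type*} [RCLike 𝕜]

theorem PosSemidef.add_mulVec_eq_zero_iff {P Q : Matrix n n 𝕜} (hP : P.PosSemidef)
    (hQ : Q.PosSemidef) (x : n → 𝕜) :
    (P + Q) *ᵥ x = 0 ↔ P *ᵥ x = 0 ∧ Q *ᵥ x = 0 := by
  rw [← (hP.add hQ).dotProduct_mulVec_zero_iff, ← hP.dotProduct_mulVec_zero_iff,
    ← hQ.dotProduct_mulVec_zero_iff, add_mulVec, dotProduct_add]
  exact add_eq_zero_iff_of_nonneg (hP.dotProduct_mulVec_nonneg x) (hQ.dotProduct_mulVec_nonneg x)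

theorem PosSemidef.mul_mul_conjTranspose_mulVec_eq_zero_iff {P : Matrix n n 𝕜}
    (hP : P.PosSemidef) (B : Matrix m n 𝕜) (x : m → 𝕜) :
    (B * P * Bᴴ) *ᵥ x = 0 ↔ P *ᵥ (Bᴴ *ᵥ x) = 0 := by
  rw [← (hP.mul_mul_conjTranspose_same B).dotProduct_mulVec_zero_iff,
    ← hP.dotProduct_mulVec_zero_iff, star_mulVec, conjTranspose_conjTranspose,
    ← dotProduct_mulVec, mulVec_mulVec, mulVec_mulVec]

theorem mulVec_sub_mul_mul_eq_zero_iff [DecidableEq n] [DecidableEq m] {Xi : Matrix n n 𝕜}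
    {C : Matrix m n 𝕜} {W : Matrix m m 𝕜} {K : Matrix n m 𝕜} (hXi : Xi.PosSemidef)
    (hW : W.PosDef) (hK : K * (C * Xi * Cᴴ + W) = Xi * Cᴴ) (x : n → 𝕜) :
    (Xi - K * C * Xi) *ᵥ x = 0 ↔ Xi *ᵥ x = 0 := by
  refine ⟨fun hx ↦ ?_, fun hx ↦ by rw [sub_mulVec, ← mulVec_mulVec, hx, mulVec_zero, sub_zero]⟩
  rw [sub_mul_mul_eq_josephForm hK, (hXi.mul_mul_conjTranspose_same _).add_mulVec_eq_zero_iff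
    (hW.posSemidef.mul_mul_conjTranspose_same _), hXi.mul_mul_conjTranspose_mulVec_eq_zero_iff,
    hW.posSemidef.mul_mul_conjTranspose_mulVec_eq_zero_iff] at hx
  obtain ⟨hXix, hWx⟩ := hx
  have hKx : Kᴴ *ᵥ x = 0 :=
    mulVec_injective_iff_isUnit.mpr hW.isUnit (by rw [hWx, mulVec_zero])
  have hKCx : (1 - K * C)ᴴ *ᵥ x = x := by
    rw [conjTranspose_sub, conjTranspose_one, conjTranspose_mul, sub_mulVec, one_mulVec,
      ← mulVec_mulVec, hKx, mulVec_zero, sub_zero]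
  rwa [hKCx] at hXix

end Matrix

theorem riccati_update_kernel_general (d m p : ℕ)
    (A : Matrix (Fin d) (Fin d) ℝ) (D : Matrix (Fin d) (Fin m) ℝ)
    (C : Matrix (Fin p) (Fin d) ℝ) (F : Matrix (Fin p) (Fin m) ℝ)
    (hF : IsUnit (F * Fᵀ))
    (S : Matrix (Fin d) (Fin d) ℝ) (hS : S.PosSemidef)
    (Xi T : Matrix (Fin d) (Fin d) ℝ)
    (hXi : Xi = D * Dᵀ + A * S * Aᵀ)
    (hT : T = Xi - Xi * Cᵀ * (C * Xi * Cᵀ + F * Fᵀ)⁻¹ * C * Xi) :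
    {x : Fin d → ℝ | T.mulVec x = 0} = {x : Fin d → ℝ | Xi.mulVec x = 0} ∧
    {x : Fin d → ℝ | Xi.mulVec x = 0} =
      {x : Fin d → ℝ | (S * Aᵀ).mulVec x = 0} ∩ {x : Fin d → ℝ | Dᵀ.mulVec x = 0} := by
  simp only [← conjTranspose_eq_transpose_of_trivial] at hF hXi hT ⊢
  have hDD := posSemidef_self_mul_conjTranspose D
  have hASA := hS.mul_mul_conjTranspose_same A
  have hXiPSD : Xi.PosSemidef := hXi ▸ hDD.add hASA
  have hFF : (F * Fᴴ).PosDef := (posSemidef_self_mul_conjTranspose F).posDef_iff_isUnit.mpr hF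
  have hM : IsUnit (C * Xi * Cᴴ + F * Fᴴ).det := (isUnit_iff_isUnit_det _).mp
    (PosDef.posSemidef_add (hXiPSD.mul_mul_conjTranspose_same C) hFF).isUnit
  constructor
  · ext x
    rw [Set.mem_ofPred_eq, hT]
    exact mulVec_sub_mul_mul_eq_zero_iff hXiPSD hFF (nonsing_inv_mul_cancel_right _ _ hM) x
  · ext x
    rw [Set.mem_inter_iff, Set.mem_ofPred_eq, Set.mem_ofPred_eq, Set.mem_ofPred_eq, hXi,
      hDD.add_mulVec_eq_zero_iff hASA, self_mul_conjTranspose_mulVec_eq_zero,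
      hS.mul_mul_conjTranspose_mulVec_eq_zero_iff, ← mulVec_mulVec, and_comm]

/-- For any positive semidefinite `S`, the kernel of the Riccati
update `𝒯_q(S) = Ξ(S) − Ξ(S)Cᵀ(C Ξ(S) Cᵀ + F Fᵀ)⁻¹ C Ξ(S)` equals the kernel
of `Ξ(S) = D Dᵀ + A S Aᵀ`, which in turn equals `ker(S Aᵀ) ∩ ker(Dᵀ)`. -/
theorem riccati_update_kernel (d m p : ℕ)
    (A : Matrix (Fin d) (Fin d) ℝ) (D : Matrix (Fin d) (Fin m) ℝ)
    (C : Matrix (Fin p) (Fin d) ℝ) (F : Matrix (Fin p) (Fin m) ℝ)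
    (hF : IsUnit (F * Fᵀ)) (hDF : D * Fᵀ = 0)
    (S : Matrix (Fin d) (Fin d) ℝ) (hS : S.PosSemidef)
    (Xi T : Matrix (Fin d) (Fin d) ℝ)
    (hXi : Xi = D * Dᵀ + A * S * Aᵀ)
    (hT : T = Xi - Xi * Cᵀ * (C * Xi * Cᵀ + F * Fᵀ)⁻¹ * C * Xi) :
    {x : Fin d → ℝ | T.mulVec x = 0} = {x : Fin d → ℝ | Xi.mulVec x = 0} ∧
    {x : Fin d → ℝ | Xi.mulVec x = 0} =
      {x : Fin d → ℝ | (S * Aᵀ).mulVec x = 0} ∩ {x : Fin d → ℝ | Dᵀ.mulVec x = 0} :=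
  riccati_update_kernel_general d m p A D C F hF S hS Xi T hXi hT
end

section
/- If (A, D) is a controllable pair, then for any sequence of d applications of Riccati update maps 𝒯_{q_1}, …, 𝒯_{q_d} (each of the form Σ ↦ Ξ(Σ) − K_q(Σ)C_qΞ(Σ) or Σ ↦ Ξ(Σ)), the composition applied to any positive semidefinite Σ is positive definite; in particular ker(𝒯_{q_d} ∘ ⋯ ∘ 𝒯_{q_1}(Σ)) = {0}. -/
/-!
Every update map preserves positive semidefiniteness and can only shrink kernels:
`Ξ(Σ)x = 0` forces `Dᵀx = 0` and `ΣAᵀx = 0`, and the Joseph form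
`𝒯(Σ) = (1 - KC) Ξ(Σ) (1 - KC)ᵀ + K FFᵀ Kᵀ` of a measurement update, with `FFᵀ ≻ 0`, shows that a
kernel vector of `𝒯(Σ)` satisfies `Kᵀx = 0` and hence lies in the kernel of `Ξ(Σ)`.
After `d` steps a kernel vector `x` of the composition satisfies `Dᵀ (Aᵀ)ʲ x = 0` for all `j < d`,
so it is orthogonal to the columns of the controllability matrix and vanishes.
-/

open Matrix

namespace Matrix

variable {n m p : Type*} [Fintype n]

section Controllability

variable {K : Type*} [Field K]

theorem eq_zero_of_vecMul_eq_zero_of_rank_eq_card [Fintype m] {B : Matrix n m K}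
    (hB : B.rank = Fintype.card n) {x : n → K} (hx : x ᵥ* B = 0) : x = 0 := by
  have hsurj : Function.Surjective B.mulVecLin := by
    rw [← LinearMap.range_eq_top]
    apply Submodule.eq_top_of_finrank_eq
    rw [← rank, hB, Module.finrank_fintype_fun_eq_card]
  refine dotProduct_eq_zero x fun w => ?_
  obtain ⟨v, rfl⟩ := hsurj w
  rw [mulVecLin_apply, dotProduct_mulVec, hx, zero_dotProduct]

variable [DecidableEq n]

def controllabilityMatrix (A : Matrix n n K) (D : Matrix n m K) (k : ℕ) :
    Matrix n (Fin k × m) K :=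
  of fun i jk => (A ^ (jk.1 : ℕ) * D) i jk.2

theorem vecMul_controllabilityMatrix (A : Matrix n n K) (D : Matrix n m K) (k : ℕ)
    (x : n → K) :
    x ᵥ* controllabilityMatrix A D k = fun jk => (x ᵥ* A ^ (jk.1 : ℕ) ᵥ* D) jk.2 := by
  funext jk
  rw [vecMul_vecMul]
  rfl

theorem eq_zero_of_controllable [Fintype m] {A : Matrix n n K} {D : Matrix n m K} {k : ℕ}
    (hAD : (controllabilityMatrix A D k).rank = Fintype.card n) {x : n → K}
    (hx : ∀ j < k, x ᵥ* A ^ j ᵥ* D = 0) : x = 0 := by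
  refine eq_zero_of_vecMul_eq_zero_of_rank_eq_card hAD ?_
  rw [vecMul_controllabilityMatrix]
  funext jk
  rw [hx jk.1 jk.1.isLt, Pi.zero_apply, Pi.zero_apply]

end Controllability

section Joseph

variable {α : Type*} [CommRing α] [Fintype p] [DecidableEq p]

noncomputable def kalmanGain (X : Matrix n n α) (C : Matrix p n α) (R : Matrix p p α) :
    Matrix n p α :=
  X * Cᵀ * (C * X * Cᵀ + R)⁻¹

theorem sub_kalmanGain_eq_joseph [DecidableEq n] (X : Matrix n n α) (C : Matrix p n α)
    {R : Matrix p p α} (hM : IsUnit (C * X * Cᵀ + R).det) :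
    X - X * Cᵀ * (C * X * Cᵀ + R)⁻¹ * C * X =
      (1 - kalmanGain X C R * C) * X * (1 - kalmanGain X C R * C)ᵀ +
        kalmanGain X C R * R * (kalmanGain X C R)ᵀ := by
  have hKM : kalmanGain X C R * (C * X * Cᵀ + R) = X * Cᵀ := by
    rw [kalmanGain, Matrix.mul_assoc, nonsing_inv_mul _ hM, Matrix.mul_one]
  calc X - X * Cᵀ * (C * X * Cᵀ + R)⁻¹ * C * X = X - kalmanGain X C R * C * X := rfl
    _ = X - kalmanGain X C R * C * X - X * Cᵀ * (kalmanGain X C R)ᵀ +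
          kalmanGain X C R * (C * X * Cᵀ + R) * (kalmanGain X C R)ᵀ := by
        rw [hKM]; abel
    _ = _ := by
        simp only [transpose_sub, transpose_one, transpose_mul, Matrix.mul_sub, Matrix.sub_mul,
          Matrix.mul_add, Matrix.add_mul, Matrix.mul_one, Matrix.one_mul, Matrix.mul_assoc]
        abel

end Joseph

section PosSemidef

theorem posSemidef_self_mul_transpose [Fintype m] (D : Matrix n m ℝ) : (D * Dᵀ).PosSemidef := by
  simpa only [conjTranspose_eq_transpose_of_trivial] using posSemidef_self_mul_conjTranspose D

theorem PosSemidef.mul_mul_transpose_same [Fintype p] {X : Matrix p p ℝ} (hX : X.PosSemidef)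
    (B : Matrix n p ℝ) : (B * X * Bᵀ).PosSemidef := by
  simpa only [conjTranspose_eq_transpose_of_trivial] using hX.mul_mul_conjTranspose_same B

theorem PosSemidef.mul_mul_transpose_mulVec_eq_zero_iff [Fintype p] {X : Matrix p p ℝ}
    (hX : X.PosSemidef) (B : Matrix n p ℝ) (x : n → ℝ) :
    (B * X * Bᵀ) *ᵥ x = 0 ↔ X *ᵥ (x ᵥ* B) = 0 := by
  have hquad : star x ⬝ᵥ (B * X * Bᵀ) *ᵥ x = star (x ᵥ* B) ⬝ᵥ X *ᵥ (x ᵥ* B) := by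
    rw [← mulVec_mulVec, ← mulVec_mulVec, dotProduct_mulVec, mulVec_transpose, star_trivial,
      star_trivial]
  rw [← (hX.mul_mul_transpose_same B).dotProduct_mulVec_zero_iff, hquad,
    hX.dotProduct_mulVec_zero_iff]

theorem PosSemidef.mulVec_eq_zero_of_add {P Q : Matrix n n ℝ} (hP : P.PosSemidef)
    (hQ : Q.PosSemidef) {x : n → ℝ} (h : (P + Q) *ᵥ x = 0) : P *ᵥ x = 0 ∧ Q *ᵥ x = 0 := by
  have hsum : star x ⬝ᵥ P *ᵥ x + star x ⬝ᵥ Q *ᵥ x = 0 := by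
    rw [← dotProduct_add, ← add_mulVec, h, dotProduct_zero]
  obtain ⟨hPx, hQx⟩ := (add_eq_zero_iff_of_nonneg (hP.dotProduct_mulVec_nonneg x)
    (hQ.dotProduct_mulVec_nonneg x)).mp hsum
  exact ⟨(hP.dotProduct_mulVec_zero_iff x).mp hPx, (hQ.dotProduct_mulVec_zero_iff x).mp hQx⟩

variable [DecidableEq n]

theorem PosDef.eq_zero_of_mulVec_eq_zero {M : Matrix n n ℝ} (hM : M.PosDef) {x : n → ℝ}
    (hx : M *ᵥ x = 0) : x = 0 :=
  mulVec_injective_iff_isUnit.mpr hM.isUnit (hx.trans (mulVec_zero M).symm)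

theorem PosSemidef.posDef_of_mulVec_eq_zero {M : Matrix n n ℝ} (hM : M.PosSemidef)
    (h : ∀ x, M *ᵥ x = 0 → x = 0) : M.PosDef := by
  refine hM.posDef_iff_isUnit.mpr (mulVec_injective_iff_isUnit.mp fun x y hxy => ?_)
  exact sub_eq_zero.mp (h _ (by rw [mulVec_sub, hxy, sub_self]))

end PosSemidef

section KalmanUpdate

variable [Fintype p] [DecidableEq p]

noncomputable def kalmanUpdate (X : Matrix n n ℝ) (C : Matrix p n ℝ) (R : Matrix p p ℝ) :
    Matrix n n ℝ :=
  X - X * Cᵀ * (C * X * Cᵀ + R)⁻¹ * C * X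

variable [DecidableEq n]

theorem PosSemidef.kalmanUpdate_eq_joseph {X : Matrix n n ℝ} (hX : X.PosSemidef)
    (C : Matrix p n ℝ) {R : Matrix p p ℝ} (hR : R.PosDef) :
    kalmanUpdate X C R = (1 - kalmanGain X C R * C) * X * (1 - kalmanGain X C R * C)ᵀ +
      kalmanGain X C R * R * (kalmanGain X C R)ᵀ :=
  sub_kalmanGain_eq_joseph X C
    ((isUnit_iff_isUnit_det _).mp (PosDef.posSemidef_add (hX.mul_mul_transpose_same C) hR).isUnit)

theorem posSemidef_kalmanUpdate {X : Matrix n n ℝ} (hX : X.PosSemidef) (C : Matrix p n ℝ)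
    {R : Matrix p p ℝ} (hR : R.PosDef) : (kalmanUpdate X C R).PosSemidef := by
  rw [hX.kalmanUpdate_eq_joseph C hR]
  exact (hX.mul_mul_transpose_same _).add (hR.posSemidef.mul_mul_transpose_same _)

theorem PosSemidef.mulVec_eq_zero_of_kalmanUpdate {X : Matrix n n ℝ} (hX : X.PosSemidef)
    (C : Matrix p n ℝ) {R : Matrix p p ℝ} (hR : R.PosDef) {x : n → ℝ}
    (hx : kalmanUpdate X C R *ᵥ x = 0) : X *ᵥ x = 0 := by
  rw [hX.kalmanUpdate_eq_joseph C hR] at hx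
  obtain ⟨hxX, hxR⟩ := (hX.mul_mul_transpose_same _).mulVec_eq_zero_of_add
    (hR.posSemidef.mul_mul_transpose_same _) hx
  have hxK : x ᵥ* kalmanGain X C R = 0 :=
    hR.eq_zero_of_mulVec_eq_zero ((hR.posSemidef.mul_mul_transpose_mulVec_eq_zero_iff _ x).mp hxR)
  have hfix : x ᵥ* (1 - kalmanGain X C R * C) = x := by
    rw [vecMul_sub, vecMul_one, ← vecMul_vecMul, hxK, zero_vecMul, sub_zero]
  rwa [hX.mul_mul_transpose_mulVec_eq_zero_iff, hfix] at hxX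

end KalmanUpdate

section RiccatiStep

/-- Preservation of positive semidefiniteness together with the inclusion
`ker f(Σ) ⊆ ker(ΣAᵀ) ∩ ker(Dᵀ)`, written with `x ᵥ* M = Mᵀ *ᵥ x`. -/
def IsRiccatiStep (A : Matrix n n ℝ) (D : Matrix n m ℝ) (f : Matrix n n ℝ → Matrix n n ℝ) :
    Prop :=
  ∀ S : Matrix n n ℝ, S.PosSemidef →
    (f S).PosSemidef ∧ ∀ x, f S *ᵥ x = 0 → x ᵥ* D = 0 ∧ S *ᵥ (x ᵥ* A) = 0

theorem isRiccatiStep_lyapunov [Fintype m] (A : Matrix n n ℝ) (D : Matrix n m ℝ) :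
    IsRiccatiStep A D fun S => D * Dᵀ + A * S * Aᵀ := by
  intro S hS
  have hD := posSemidef_self_mul_transpose D
  refine ⟨hD.add (hS.mul_mul_transpose_same A), fun x hx => ?_⟩
  obtain ⟨hxD, hxA⟩ := hD.mulVec_eq_zero_of_add (hS.mul_mul_transpose_same A) hx
  rw [← conjTranspose_eq_transpose_of_trivial, self_mul_conjTranspose_mulVec_eq_zero,
    conjTranspose_eq_transpose_of_trivial, mulVec_transpose] at hxD
  exact ⟨hxD, (hS.mul_mul_transpose_mulVec_eq_zero_iff A x).mp hxA⟩

theorem IsRiccatiStep.kalmanUpdate [DecidableEq n] [Fintype p] [DecidableEq p]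
    {A : Matrix n n ℝ} {D : Matrix n m ℝ} {f : Matrix n n ℝ → Matrix n n ℝ}
    (hf : IsRiccatiStep A D f) (C : Matrix p n ℝ) {R : Matrix p p ℝ} (hR : R.PosDef) :
    IsRiccatiStep A D fun S => kalmanUpdate (f S) C R :=
  fun S hS => ⟨posSemidef_kalmanUpdate (hf S hS).1 C hR,
    fun _ hx => (hf S hS).2 _ ((hf S hS).1.mulVec_eq_zero_of_kalmanUpdate C hR hx)⟩

theorem IsRiccatiStep.foldl [DecidableEq n] {A : Matrix n n ℝ} {D : Matrix n m ℝ}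
    {L : List (Matrix n n ℝ → Matrix n n ℝ)} (hL : ∀ f ∈ L, IsRiccatiStep A D f)
    {S : Matrix n n ℝ} (hS : S.PosSemidef) :
    (L.foldl (fun M f => f M) S).PosSemidef ∧
      ∀ x, L.foldl (fun M f => f M) S *ᵥ x = 0 →
        (∀ j < L.length, x ᵥ* A ^ j ᵥ* D = 0) ∧ S *ᵥ (x ᵥ* A ^ L.length) = 0 := by
  induction L generalizing S with
  | nil => simpa using hS
  | cons f L ih =>
    obtain ⟨hfS, hf_ker⟩ := hL f List.mem_cons_self S hS
    obtain ⟨hpsd, hker⟩ := ih (fun g hg => hL g (List.mem_cons_of_mem f hg)) hfS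
    refine ⟨hpsd, fun x hx => ?_⟩
    obtain ⟨hlow, hlast⟩ := hker x hx
    obtain ⟨hD, hA⟩ := hf_ker _ hlast
    refine ⟨fun j hj => ?_, by rwa [List.length_cons, pow_succ, ← vecMul_vecMul]⟩
    rcases Nat.lt_succ_iff_lt_or_eq.mp hj with hj | rfl
    · exact hlow j hj
    · exact hD

end RiccatiStep

end Matrix

/-- If `(A, D)` is controllable, then the composition of any `d`
Riccati update maps (each either `S ↦ Ξ(S)` or
`S ↦ Ξ(S) − Ξ(S)Cᵀ(CΞ(S)Cᵀ + FFᵀ)⁻¹CΞ(S)` for some output matrices `C, F`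
with `FFᵀ` invertible and `DFᵀ = 0`), applied to any positive semidefinite `S`,
is positive definite; in particular its kernel is trivial. -/
theorem riccati_d_steps_posdef (d m : ℕ)
    (A : Matrix (Fin d) (Fin d) ℝ) (D : Matrix (Fin d) (Fin m) ℝ)
    -- controllability: the block matrix [D | AD | ⋯ | A^{d−1}D] has rank d
    (hctrb : (Matrix.of fun (i : Fin d) (jk : Fin d × Fin m) =>
        (A ^ (jk.1 : ℕ) * D) i jk.2).rank = d)
    (Xi : Matrix (Fin d) (Fin d) ℝ → Matrix (Fin d) (Fin d) ℝ)
    (hXi : ∀ S, Xi S = D * Dᵀ + A * S * Aᵀ)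
    (g : Fin d → (Matrix (Fin d) (Fin d) ℝ → Matrix (Fin d) (Fin d) ℝ))
    (hg : ∀ k : Fin d, g k = Xi ∨
      ∃ (p : ℕ) (C : Matrix (Fin p) (Fin d) ℝ) (F : Matrix (Fin p) (Fin m) ℝ),
        IsUnit (F * Fᵀ) ∧ D * Fᵀ = 0 ∧
        g k = fun S => Xi S - Xi S * Cᵀ * (C * Xi S * Cᵀ + F * Fᵀ)⁻¹ * C * Xi S)
    (S : Matrix (Fin d) (Fin d) ℝ) (hS : S.PosSemidef) :
    ((List.ofFn g).foldl (fun M f => f M) S).PosDef ∧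
    {x : Fin d → ℝ | ((List.ofFn g).foldl (fun M f => f M) S).mulVec x = 0} = {0} := by
  obtain rfl : Xi = fun S => D * Dᵀ + A * S * Aᵀ := funext hXi
  have hsteps : ∀ f ∈ List.ofFn g, IsRiccatiStep A D f := by
    intro f hf
    obtain ⟨k, rfl⟩ := List.mem_ofFn.mp hf
    rcases hg k with h | ⟨p, C, F, hF, -, h⟩
    · exact h ▸ isRiccatiStep_lyapunov A D
    · have hR : (F * Fᵀ).PosDef := (posSemidef_self_mul_transpose F).posDef_iff_isUnit.mpr hF
      exact h ▸ (isRiccatiStep_lyapunov A D).kalmanUpdate C hR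
  obtain ⟨hpsd, hker⟩ := IsRiccatiStep.foldl hsteps hS
  have hinj : ∀ x, (List.ofFn g).foldl (fun M f => f M) S *ᵥ x = 0 → x = 0 := fun x hx =>
    eq_zero_of_controllable (k := d) (hctrb.trans (Fintype.card_fin d).symm) fun j hj =>
      (hker x hx).1 j (by rwa [List.length_ofFn])
  exact ⟨hpsd.posDef_of_mulVec_eq_zero hinj,
    Set.eq_singleton_iff_unique_mem.mpr ⟨mulVec_zero _, hinj⟩⟩
end

section
/- Suppose a nonnegative function f* and a constant ϱ* satisfy the Bellman equation f*(z) + ϱ* = min_q {c_q(z) + 𝒯̂_q f*(z)} with c_q ≥ 0, and suppose there exist θ₁ ∈ (0,1), θ₂ > 0 with min_q c_q(z) ≥ θ₁ f*(z) − θ₂ for all z. Then for any selector q* of the minimizer, 𝒯̂_{q*} f*(z) ≤ (1−θ₁) f*(z) + (ϱ* + θ₂) for all z, and consequently the n-step expectation satisfies E^{q*}_z[f*(Z_n)] ≤ (ϱ* + θ₂)/θ₁ + (1−θ₁)ⁿ f*(z) for all n. -/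
/-!
Because `q*` attains the minimum, `𝒯̂_{q*} f* = f* + ϱ* − c_{q*} ≤ f* + ϱ* − min_q c_q`, and the cost
bound turns this into the drift `𝒯̂_{q*} f* ≤ (1−θ₁) f* + b` with `b = ϱ* + θ₂`. Iterating the drift
through the monotone, affine operator `𝒯̂_{q*}` gives the exact geometric bound
`E_z[f*(Z_n)] ≤ b/θ₁ + (1−θ₁)ⁿ (f*(z) − b/θ₁)`. The iterates are nonnegative, so letting `n → ∞`
forces `b/θ₁ ≥ 0`, and dropping the term `−(1−θ₁)ⁿ b/θ₁` yields the claimed moment bound.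
-/

open Filter Topology

theorem nonneg_of_forall_nonneg_add_pow_mul {a r x : ℝ} (hr0 : 0 ≤ r) (hr1 : r < 1)
    (h : ∀ n : ℕ, 0 ≤ a + r ^ n * x) : 0 ≤ a := by
  have hlim : Tendsto (fun n : ℕ => a + r ^ n * x) atTop (𝓝 a) := by
    simpa using tendsto_const_nhds.add ((tendsto_pow_atTop_nhds_zero_of_lt_one hr0 hr1).mul_const x)
  exact ge_of_tendsto' hlim h

structure IsMarkovOperator {Z : Type*} (T : (Z → ℝ) → (Z → ℝ)) : Prop where
  mono : Monotone T
  map_add_const : ∀ (f : Z → ℝ) (a : ℝ), T (fun z => f z + a) = fun z => T f z + a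
  map_mul_const : ∀ (f : Z → ℝ) (r : ℝ), 0 ≤ r → T (fun z => r * f z) = fun z => r * T f z

namespace IsMarkovOperator

variable {Z : Type*} {T : (Z → ℝ) → (Z → ℝ)}

theorem selector {Q : Type*} {That : Q → (Z → ℝ) → (Z → ℝ)}
    (hThat : ∀ q, IsMarkovOperator (That q)) (qs : Z → Q) :
    IsMarkovOperator (fun g z => That (qs z) g z) where
  mono _ _ hfg z := (hThat (qs z)).mono hfg z
  map_add_const f a := funext fun z => congrFun ((hThat (qs z)).map_add_const f a) z
  map_mul_const f r hr := funext fun z => congrFun ((hThat (qs z)).map_mul_const f r hr) z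

theorem map_zero (hT : IsMarkovOperator T) : T 0 = 0 := by
  simpa [← Pi.zero_def] using hT.map_mul_const 0 0 le_rfl

theorem map_mul_add_const (hT : IsMarkovOperator T) (f : Z → ℝ) {s : ℝ} (hs : 0 ≤ s) (a : ℝ) :
    T (fun z => s * f z + a) = fun z => s * T f z + a := by
  rw [hT.map_add_const (fun z => s * f z), hT.map_mul_const f s hs]

theorem iterate_nonneg (hT : IsMarkovOperator T) {f : Z → ℝ} (hf : 0 ≤ f) (n : ℕ) :
    0 ≤ T^[n] f := by
  induction n with
  | zero => exact hf
  | succ n ih =>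
    rw [Function.iterate_succ_apply', ← hT.map_zero]
    exact hT.mono ih

theorem iterate_le_of_drift (hT : IsMarkovOperator T) {f : Z → ℝ} {θ b : ℝ}
    (hθ0 : 0 < θ) (hθ1 : θ ≤ 1) (hdrift : ∀ z, T f z ≤ (1 - θ) * f z + b) (n : ℕ) (z : Z) :
    T^[n] f z ≤ b / θ + (1 - θ) ^ n * (f z - b / θ) := by
  induction n generalizing z with
  | zero => simp
  | succ n ih =>
    have hpow : 0 ≤ (1 - θ) ^ n := pow_nonneg (by linarith) n
    have hlin : ∀ z', T^[n] f z' ≤ (1 - θ) ^ n * f z' + (1 - (1 - θ) ^ n) * (b / θ) := by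
      intro z'; linarith [ih z']
    calc T^[n + 1] f z
        ≤ T (fun z' => (1 - θ) ^ n * f z' + (1 - (1 - θ) ^ n) * (b / θ)) z := by
          rw [Function.iterate_succ_apply']; exact hT.mono hlin z
      _ = (1 - θ) ^ n * T f z + (1 - (1 - θ) ^ n) * (b / θ) := by
          rw [hT.map_mul_add_const f hpow]
      _ ≤ (1 - θ) ^ n * ((1 - θ) * f z + b) + (1 - (1 - θ) ^ n) * (b / θ) := by
          gcongr; exact hdrift z
      _ = b / θ + (1 - θ) ^ (n + 1) * (f z - b / θ) := by
          field_simp; ring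

theorem iterate_le_of_drift_of_nonneg (hT : IsMarkovOperator T) {f : Z → ℝ} (hf : 0 ≤ f)
    {θ b : ℝ} (hθ0 : 0 < θ) (hθ1 : θ ≤ 1) (hdrift : ∀ z, T f z ≤ (1 - θ) * f z + b)
    (n : ℕ) (z : Z) : T^[n] f z ≤ b / θ + (1 - θ) ^ n * f z := by
  have hbound := hT.iterate_le_of_drift hθ0 hθ1 hdrift
  have hr0 : 0 ≤ 1 - θ := by linarith
  have hb : 0 ≤ b / θ := nonneg_of_forall_nonneg_add_pow_mul hr0 (by linarith)
    fun m => (hT.iterate_nonneg hf m z).trans (hbound m z)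
  nlinarith [hbound n z, pow_nonneg hr0 n]

end IsMarkovOperator

theorem selector_drift {Z Q : Type*} {That : Q → (Z → ℝ) → (Z → ℝ)} {c : Q → Z → ℝ}
    (hc : ∀ q z, 0 ≤ c q z) {fstar : Z → ℝ} {ϱ θ₁ θ₂ : ℝ}
    (hcost : ∀ z, θ₁ * fstar z - θ₂ ≤ ⨅ q, c q z) {qs : Z → Q}
    (hsel : ∀ z, c (qs z) z + That (qs z) fstar z = fstar z + ϱ) (z : Z) :
    That (qs z) fstar z ≤ (1 - θ₁) * fstar z + (ϱ + θ₂) := by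
  have hbdd : BddBelow (Set.range fun q => c q z) := ⟨0, by rintro _ ⟨q, rfl⟩; exact hc q z⟩
  have hmin := (hcost z).trans (ciInf_le hbdd (qs z))
  linarith [hsel z]

theorem bellman_drift_and_moment_general {Z Q : Type*}
    (That : Q → (Z → ℝ) → (Z → ℝ))
    (hmono : ∀ (q : Q) (f g : Z → ℝ), (∀ z, f z ≤ g z) → ∀ z, That q f z ≤ That q g z)
    (hconst : ∀ (q : Q) (f : Z → ℝ) (a : ℝ),
      That q (fun z => f z + a) = fun z => That q f z + a)
    (hhom : ∀ (q : Q) (f : Z → ℝ) (r : ℝ), 0 ≤ r →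
      That q (fun z => r * f z) = fun z => r * That q f z)
    (c : Q → Z → ℝ) (hc : ∀ q z, 0 ≤ c q z)
    (fstar : Z → ℝ) (hfstar : ∀ z, 0 ≤ fstar z) (ϱ : ℝ)
    (θ₁ θ₂ : ℝ) (hθ₁0 : 0 < θ₁) (hθ₁1 : θ₁ < 1)
    (hcost : ∀ z, θ₁ * fstar z - θ₂ ≤ ⨅ q, c q z)
    (qs : Z → Q)
    (hsel : ∀ z, c (qs z) z + That (qs z) fstar z = fstar z + ϱ) :
    (∀ z, (fun g (z' : Z) => That (qs z') g z') fstar z ≤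
        (1 - θ₁) * fstar z + (ϱ + θ₂)) ∧
    (∀ (n : ℕ) (z : Z),
      (fun g (z' : Z) => That (qs z') g z')^[n] fstar z ≤
        (ϱ + θ₂) / θ₁ + (1 - θ₁) ^ n * fstar z) := by
  have hThat : ∀ q, IsMarkovOperator (That q) := fun q =>
    ⟨fun f g hfg => hmono q f g hfg, hconst q, hhom q⟩
  have hdrift := selector_drift hc hcost hsel
  exact ⟨hdrift, (IsMarkovOperator.selector hThat qs).iterate_le_of_drift_of_nonneg
    hfstar hθ₁0 hθ₁1.le hdrift⟩

/-- Given Markov operators `𝒯̂_q` and a nonnegative solution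
`(f*, ϱ*)` of the Bellman equation `f* + ϱ* = min_q {c_q + 𝒯̂_q f*}` with
`min_q c_q ≥ θ₁ f* − θ₂`, any selector `q*` of the minimizer satisfies the
drift `𝒯̂_{q*} f* ≤ (1−θ₁) f* + (ϱ* + θ₂)`, and the `n`-step expectation
satisfies `E^{q*}_z[f*(Z_n)] ≤ (ϱ* + θ₂)/θ₁ + (1−θ₁)ⁿ f*(z)`. -/
theorem bellman_drift_and_moment {Z Q : Type*} [Fintype Q] [Nonempty Q]
    (That : Q → (Z → ℝ) → (Z → ℝ))
    (hmono : ∀ (q : Q) (f g : Z → ℝ), (∀ z, f z ≤ g z) → ∀ z, That q f z ≤ That q g z)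
    (hconst : ∀ (q : Q) (f : Z → ℝ) (a : ℝ),
      That q (fun z => f z + a) = fun z => That q f z + a)
    (hhom : ∀ (q : Q) (f : Z → ℝ) (r : ℝ), 0 ≤ r →
      That q (fun z => r * f z) = fun z => r * That q f z)
    (c : Q → Z → ℝ) (hc : ∀ q z, 0 ≤ c q z)
    (fstar : Z → ℝ) (hfstar : ∀ z, 0 ≤ fstar z) (ϱ : ℝ)
    (hbellman : ∀ z, fstar z + ϱ = ⨅ q, (c q z + That q fstar z))
    (θ₁ θ₂ : ℝ) (hθ₁0 : 0 < θ₁) (hθ₁1 : θ₁ < 1) (hθ₂ : 0 < θ₂)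
    (hcost : ∀ z, θ₁ * fstar z - θ₂ ≤ ⨅ q, c q z)
    (qs : Z → Q)
    (hsel : ∀ z, c (qs z) z + That (qs z) fstar z = fstar z + ϱ) :
    (∀ z, (fun g (z' : Z) => That (qs z') g z') fstar z ≤
        (1 - θ₁) * fstar z + (ϱ + θ₂)) ∧
    (∀ (n : ℕ) (z : Z),
      (fun g (z' : Z) => That (qs z') g z')^[n] fstar z ≤
        (ϱ + θ₂) / θ₁ + (1 - θ₁) ^ n * fstar z) :=
  bellman_drift_and_moment_general That hmono hconst hhom c hc fstar hfstar ϱ θ₁ θ₂ hθ₁0 hθ₁1 hcost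
    qs hsel
end

section
/- Value iteration bounds: under the Bellman equation f* + ϱ* = min_q{c_q + 𝒯̂_q f*} with the drift bounds 𝒯̂_{q*}f* ≤ ρ f* + (ϱ* + θ₂) where ρ = 1 − θ₁, and with φ₀ nonnegative satisfying φ₀ ≤ κ f* for κ = ‖φ₀‖_{f*}, the value iteration iterates satisfy (1 − ρⁿ)(f*(z) − δ) ≤ φ_n(z) ≤ f*(z) + ((κ − 1) ∨ 0)(δ + ρⁿ f*(z)) for all n and z, where δ = (ϱ* + θ₂)/θ₁. -/
/-!
Both bounds are proved by induction on `n`, propagating affine bounds in `f*` through one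
step of value iteration. For the lower bound, a Bellman step applied to
`(1 - p)(f* - δ)` is bounded below by splitting `c_q = (1 - p) c_q + p c_q`: the Bellman
equation handles the first part and the cost bound `c_q ≥ θ₁ f* - θ₂` the second. For the
upper bound one follows the policy `q*`, which reproduces `f*` exactly up to the drift of
`𝒯̂_{q*} f*`. The upper bound obtained this way is `f* + ((κ - 1) ∨ 0)((1 - ρⁿ) δ + ρⁿ f*)`,
which implies the stated one because `δ ≥ 0`: since `𝒯̂_{q*} f* ≥ inf f*`, the drift bound
forces `θ₁ inf f* ≤ ϱ* + θ₂`.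
-/

open Set

structure IsMarkovOperator_s10 {Z : Type*} (T : (Z → ℝ) → Z → ℝ) : Prop where
  mono : Monotone T
  map_add : ∀ f g : Z → ℝ, T (fun z => f z + g z) = fun z => T f z + T g z
  map_const : ∀ a : ℝ, T (fun _ => a) = fun _ => a
  map_mul : ∀ (f : Z → ℝ) (r : ℝ), 0 ≤ r → T (fun z => r * f z) = fun z => r * T f z

namespace IsMarkovOperator_s10

variable {Z : Type*} {T : (Z → ℝ) → Z → ℝ}

theorem apply_mul_add_const (hT : IsMarkovOperator_s10 T) (g : Z → ℝ) {r : ℝ} (hr : 0 ≤ r)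
    (b : ℝ) (z : Z) : T (fun w => r * g w + b) z = r * T g z + b := by
  rw [hT.map_add, hT.map_mul g r hr, hT.map_const]

theorem const_le_apply (hT : IsMarkovOperator_s10 T) {m : ℝ} {g : Z → ℝ} (hg : ∀ w, m ≤ g w)
    (z : Z) : m ≤ T g z := by
  simpa [hT.map_const] using hT.mono hg z

end IsMarkovOperator_s10

theorem one_sub_mul_iInf_le {Z : Type*} [Nonempty Z] {f : Z → ℝ} {ρ s : ℝ} (hρ : 0 < ρ)
    (h : ∀ z, (⨅ w, f w) ≤ ρ * f z + s) : (1 - ρ) * (⨅ w, f w) ≤ s := by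
  have : ((⨅ w, f w) - s) / ρ ≤ ⨅ w, f w :=
    le_ciInf fun z => (div_le_iff₀' hρ).2 (by linarith [h z])
  rw [div_le_iff₀' hρ] at this
  linarith

noncomputable def bellmanOp {Z Q : Type*} (c : Q → Z → ℝ) (T : Q → (Z → ℝ) → Z → ℝ)
    (g : Z → ℝ) (z : Z) : ℝ :=
  ⨅ q, (c q z + T q g z)

section ValueIteration

variable {Z Q : Type*} {T : Q → (Z → ℝ) → Z → ℝ} {c : Q → Z → ℝ} {f g : Z → ℝ}
  {ϱ ρ θ₂ δ : ℝ}

theorem bellmanOp_le [Finite Q] (q : Q) (z : Z) : bellmanOp c T g z ≤ c q z + T q g z :=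
  ciInf_le (finite_range _).bddBelow q

theorem le_bellmanOp [Nonempty Q] {a : ℝ} {z : Z} (h : ∀ q, a ≤ c q z + T q g z) :
    a ≤ bellmanOp c T g z :=
  le_ciInf h

theorem drift_offset_nonneg [Nonempty Z] (hT : ∀ q, IsMarkovOperator_s10 (T q)) (hf : ∀ z, 0 ≤ f z)
    (hρ0 : 0 < ρ) (hρ1 : ρ < 1) {qstar : Z → Q} {s : ℝ}
    (hdrift : ∀ z, T (qstar z) f z ≤ ρ * f z + s) : 0 ≤ s := by
  have hbdd : BddBelow (range f) := ⟨0, by rintro _ ⟨w, rfl⟩; exact hf w⟩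
  have hm : 0 ≤ ⨅ w, f w := le_ciInf hf
  have key : (1 - ρ) * (⨅ w, f w) ≤ s := one_sub_mul_iInf_le hρ0 fun z =>
    ((hT (qstar z)).const_le_apply (fun w => ciInf_le hbdd w) z).trans (hdrift z)
  nlinarith

theorem lower_bound_step [Finite Q] [Nonempty Q] (hT : ∀ q, IsMarkovOperator_s10 (T q))
    (hbellman : ∀ z, f z + ϱ = bellmanOp c T f z)
    (hcost : ∀ q z, (1 - ρ) * f z - θ₂ ≤ c q z) (hδ : (1 - ρ) * δ = ϱ + θ₂)
    {p : ℝ} (hp0 : 0 ≤ p) (hp1 : p ≤ 1) (hg : ∀ w, (1 - p) * (f w - δ) ≤ g w) (z : Z) :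
    (1 - ρ * p) * (f z - δ) ≤ bellmanOp c T g z - ϱ := by
  suffices ∀ q, (1 - ρ * p) * (f z - δ) + ϱ ≤ c q z + T q g z by
    linarith [le_bellmanOp this]
  intro q
  have hTg : (1 - p) * T q f z + -((1 - p) * δ) ≤ T q g z := by
    rw [← (hT q).apply_mul_add_const f (by linarith)]
    exact (hT q).mono (fun w => by linarith [hg w]) z
  have hopt : (1 - p) * (f z + ϱ) ≤ (1 - p) * (c q z + T q f z) :=
    mul_le_mul_of_nonneg_left ((hbellman z).trans_le (bellmanOp_le q z)) (by linarith)
  have hc : p * ((1 - ρ) * f z - θ₂) ≤ p * c q z := mul_le_mul_of_nonneg_left (hcost q z) hp0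
  linear_combination hTg + hopt + hc - p * hδ

theorem upper_bound_step [Finite Q] (hT : ∀ q, IsMarkovOperator_s10 (T q)) {qstar : Z → Q}
    (hqstar : ∀ z, c (qstar z) z + T (qstar z) f z = f z + ϱ)
    (hdrift : ∀ z, T (qstar z) f z ≤ ρ * f z + (ϱ + θ₂)) (hδ : (1 - ρ) * δ = ϱ + θ₂)
    {M p : ℝ} (hM : 0 ≤ M) (hp : 0 ≤ p) (hg : ∀ w, g w ≤ f w + M * ((1 - p) * δ + p * f w))
    (z : Z) :
    bellmanOp c T g z - ϱ ≤ f z + M * ((1 - ρ * p) * δ + ρ * p * f z) := by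
  have hTg : T (qstar z) g z ≤ (1 + M * p) * T (qstar z) f z + M * (1 - p) * δ := by
    rw [← (hT (qstar z)).apply_mul_add_const f (by positivity)]
    exact (hT (qstar z)).mono (fun w => by linarith [hg w]) z
  have hdrift' : M * p * T (qstar z) f z ≤ M * p * (ρ * f z + (ϱ + θ₂)) :=
    mul_le_mul_of_nonneg_left (hdrift z) (by positivity)
  have hopt : bellmanOp c T g z ≤ c (qstar z) z + T (qstar z) g z := bellmanOp_le (qstar z) z
  linear_combination hopt + hTg + hdrift' + hqstar z - M * p * hδ

variable [Finite Q] {φ : ℕ → Z → ℝ}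

theorem lower_bound [Nonempty Q] (hT : ∀ q, IsMarkovOperator_s10 (T q))
    (hbellman : ∀ z, f z + ϱ = bellmanOp c T f z)
    (hcost : ∀ q z, (1 - ρ) * f z - θ₂ ≤ c q z) (hδ : (1 - ρ) * δ = ϱ + θ₂)
    (hρ0 : 0 ≤ ρ) (hρ1 : ρ ≤ 1) (hVI : ∀ n z, φ (n + 1) z = bellmanOp c T (φ n) z - ϱ)
    (hφ0 : ∀ z, 0 ≤ φ 0 z) (n : ℕ) (z : Z) : (1 - ρ ^ n) * (f z - δ) ≤ φ n z := by
  induction n generalizing z with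
  | zero => simpa using hφ0 z
  | succ n ih =>
    rw [hVI, pow_succ']
    exact lower_bound_step hT hbellman hcost hδ (by positivity) (pow_le_one₀ hρ0 hρ1) ih z

theorem upper_bound (hT : ∀ q, IsMarkovOperator_s10 (T q)) {qstar : Z → Q}
    (hqstar : ∀ z, c (qstar z) z + T (qstar z) f z = f z + ϱ)
    (hdrift : ∀ z, T (qstar z) f z ≤ ρ * f z + (ϱ + θ₂)) (hδ : (1 - ρ) * δ = ϱ + θ₂)
    (hρ : 0 ≤ ρ) {M : ℝ} (hM : 0 ≤ M) (hVI : ∀ n z, φ (n + 1) z = bellmanOp c T (φ n) z - ϱ)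
    (hφ0 : ∀ z, φ 0 z ≤ (1 + M) * f z) (n : ℕ) (z : Z) :
    φ n z ≤ f z + M * ((1 - ρ ^ n) * δ + ρ ^ n * f z) := by
  induction n generalizing z with
  | zero => simpa [add_mul] using hφ0 z
  | succ n ih =>
    rw [hVI, pow_succ']
    exact upper_bound_step hT hqstar hdrift hδ hM (by positivity) ih z

end ValueIteration

theorem value_iteration_bounds_general {Z Q : Type*} [Fintype Q] [Nonempty Q]
    (That : Q → (Z → ℝ) → (Z → ℝ))
    (hmono : ∀ (q : Q) (f g : Z → ℝ), (∀ z, f z ≤ g z) → ∀ z, That q f z ≤ That q g z)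
    (hadd : ∀ (q : Q) (f g : Z → ℝ),
      That q (fun z => f z + g z) = fun z => That q f z + That q g z)
    (hconst : ∀ (q : Q) (a : ℝ), That q (fun _ => a) = fun _ => a)
    (hhom : ∀ (q : Q) (f : Z → ℝ) (r : ℝ), 0 ≤ r →
      That q (fun z => r * f z) = fun z => r * That q f z)
    (c : Q → Z → ℝ)
    (fstar : Z → ℝ) (hfstar : ∀ z, 0 ≤ fstar z) (ϱ : ℝ)
    (hbellman : ∀ z, fstar z + ϱ = ⨅ q, (c q z + That q fstar z))
    (θ₁ θ₂ : ℝ) (hθ₁0 : 0 < θ₁) (hθ₁1 : θ₁ < 1)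
    (hcost : ∀ z, θ₁ * fstar z - θ₂ ≤ ⨅ q, c q z)
    (ρ δ : ℝ) (hρ : ρ = 1 - θ₁) (hδ : δ = (ϱ + θ₂) / θ₁)
    (qstar : Z → Q)
    (hqstar : ∀ z, c (qstar z) z + That (qstar z) fstar z = fstar z + ϱ)
    (hdrift : ∀ z, That (qstar z) fstar z ≤ ρ * fstar z + (ϱ + θ₂))
    (φ : ℕ → Z → ℝ)
    (hVI : ∀ n z, φ (n + 1) z = (⨅ q, (c q z + That q (φ n) z)) - ϱ)
    (κ : ℝ) (hφ0 : ∀ z, 0 ≤ φ 0 z) (hφ0κ : ∀ z, φ 0 z ≤ κ * fstar z) :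
    ∀ (n : ℕ) (z : Z),
      (1 - ρ ^ n) * (fstar z - δ) ≤ φ n z ∧
      φ n z ≤ fstar z + (max (κ - 1) 0) * (δ + ρ ^ n * fstar z) := by
  intro n z
  have : Nonempty Z := ⟨z⟩
  obtain rfl : θ₁ = 1 - ρ := by linarith
  have hT : ∀ q, IsMarkovOperator_s10 (That q) := fun q => ⟨hmono q, hadd q, hconst q, hhom q⟩
  have hδ' : (1 - ρ) * δ = ϱ + θ₂ := by rw [hδ]; field_simp
  have hδ0 : 0 ≤ δ := by
    rw [hδ]
    exact div_nonneg (drift_offset_nonneg hT hfstar (by linarith) (by linarith) hdrift) hθ₁0.le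
  have hcost' : ∀ q z, (1 - ρ) * fstar z - θ₂ ≤ c q z := fun q z =>
    (hcost z).trans (ciInf_le (finite_range _).bddBelow q)
  have hM : 0 ≤ max (κ - 1) 0 := le_max_right _ _
  have hφ0' : ∀ z, φ 0 z ≤ (1 + max (κ - 1) 0) * fstar z := fun z =>
    (hφ0κ z).trans (mul_le_mul_of_nonneg_right (by linarith [le_max_left (κ - 1) 0]) (hfstar z))
  refine ⟨lower_bound hT hbellman hcost' hδ' (by linarith) (by linarith) hVI hφ0 n z,
    (upper_bound hT hqstar hdrift hδ' (by linarith) hM hVI hφ0' n z).trans ?_⟩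
  have : (1 - ρ ^ n) * δ ≤ δ := by nlinarith [pow_nonneg (show 0 ≤ ρ by linarith) n]
  gcongr

/-- value iteration bounds. Under the Bellman equation with the
cost bound `min_q c_q ≥ θ₁ f* − θ₂`, the drift `𝒯̂_{q*} f* ≤ ρ f* + (ϱ*+θ₂)`
(`ρ = 1 − θ₁`), and a nonnegative initial condition `φ₀ ≤ κ f*`, the value
iteration iterates satisfy
`(1 − ρⁿ)(f* − δ) ≤ φ_n ≤ f* + ((κ−1) ∨ 0)(δ + ρⁿ f*)`, `δ = (ϱ*+θ₂)/θ₁`. -/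
theorem value_iteration_bounds {Z Q : Type*} [Fintype Q] [Nonempty Q]
    (That : Q → (Z → ℝ) → (Z → ℝ))
    (hmono : ∀ (q : Q) (f g : Z → ℝ), (∀ z, f z ≤ g z) → ∀ z, That q f z ≤ That q g z)
    (hadd : ∀ (q : Q) (f g : Z → ℝ),
      That q (fun z => f z + g z) = fun z => That q f z + That q g z)
    (hconst : ∀ (q : Q) (a : ℝ), That q (fun _ => a) = fun _ => a)
    (hhom : ∀ (q : Q) (f : Z → ℝ) (r : ℝ), 0 ≤ r →
      That q (fun z => r * f z) = fun z => r * That q f z)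
    (c : Q → Z → ℝ) (hc : ∀ q z, 0 ≤ c q z)
    (fstar : Z → ℝ) (hfstar : ∀ z, 0 ≤ fstar z) (ϱ : ℝ)
    (hbellman : ∀ z, fstar z + ϱ = ⨅ q, (c q z + That q fstar z))
    (θ₁ θ₂ : ℝ) (hθ₁0 : 0 < θ₁) (hθ₁1 : θ₁ < 1) (hθ₂ : 0 ≤ θ₂)
    (hcost : ∀ z, θ₁ * fstar z - θ₂ ≤ ⨅ q, c q z)
    (ρ δ : ℝ) (hρ : ρ = 1 - θ₁) (hδ : δ = (ϱ + θ₂) / θ₁)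
    (qstar : Z → Q)
    (hqstar : ∀ z, c (qstar z) z + That (qstar z) fstar z = fstar z + ϱ)
    (hdrift : ∀ z, That (qstar z) fstar z ≤ ρ * fstar z + (ϱ + θ₂))
    (φ : ℕ → Z → ℝ)
    (hVI : ∀ n z, φ (n + 1) z = (⨅ q, (c q z + That q (φ n) z)) - ϱ)
    (κ : ℝ) (hφ0 : ∀ z, 0 ≤ φ 0 z) (hφ0κ : ∀ z, φ 0 z ≤ κ * fstar z) :
    ∀ (n : ℕ) (z : Z),
      (1 - ρ ^ n) * (fstar z - δ) ≤ φ n z ∧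
      φ n z ≤ fstar z + (max (κ - 1) 0) * (δ + ρ ^ n * fstar z) :=
  value_iteration_bounds_general That hmono hadd hconst hhom c fstar hfstar ϱ hbellman θ₁ θ₂ hθ₁0
    hθ₁1 hcost ρ δ hρ hδ qstar hqstar hdrift φ hVI κ hφ0 hφ0κ
end

section
/- Stability of rolling-horizon policies: with ρ = 1 − θ₁ ∈ (0,1) and the value iteration bounds (1−ρⁿ)(f* − δ) ≤ φ_n ≤ f* (taking φ₀ = 0), if n > log θ₁ / log(1−θ₁) then ρ/(1 − ρⁿ) < 1, and the stage-n minimizing selector q_n satisfies the Foster–Lyapunov drift inequality 𝒯̂_{q_n} f* ≤ (ρ/(1 − ρⁿ)) f* + δ(1 + (1−ρ)/(1−ρⁿ)). -/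
/-!
Split `f* = φ_n + (f* − φ_n)`. On the first part the selector `q_n` is optimal for the value
iteration, so `𝒯̂_{q_n} φ_n = φ_{n+1} + ϱ* − c_{q_n} ≤ f* + ϱ* − θ₁ f* + θ₂`. The lower sandwich
bound gives `f* − φ_n ≤ ρⁿ f* + (1 − ρⁿ) δ`, and a monotone, additive, constant-preserving
operator respects such affine bounds, so `𝒯̂_{q_n}(f* − φ_n) ≤ ρⁿ 𝒯̂_{q_n} f* + (1 − ρⁿ) δ`.
Adding up, `(1 − ρⁿ) 𝒯̂_{q_n} f* ≤ ρ f* + θ₁ δ + (1 − ρⁿ) δ`, and `1 − ρⁿ > 1 − θ₁ = ρ > 0`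
exactly when `n > log θ₁ / log ρ`.
-/

open Real

theorem pow_lt_of_log_div_log_lt {x y : ℝ} (hx₀ : 0 < x) (hx₁ : x < 1) (hy : 0 < y) {n : ℕ}
    (hn : log y / log x < n) : x ^ n < y := by
  have hlog : n * log x < log y := (div_lt_iff_of_neg (log_neg hx₀ hx₁)).1 hn
  rwa [← log_pow, log_lt_log_iff (pow_pos hx₀ n) hy] at hlog

theorem le_mul_of_forall_lt_rat_imp_le_mul {x t a : ℝ} (ha : 0 ≤ a)
    (h : ∀ s : ℚ, t < s → x ≤ s * a) : x ≤ t * a := by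
  rcases ha.eq_or_lt with rfl | ha
  · obtain ⟨s, hs⟩ := exists_rat_gt t
    simpa using h s hs
  · rw [← div_le_iff₀ ha]
    exact le_of_forall_lt_rat_imp_le fun s hs => (div_le_iff₀ ha).2 (h s hs)

namespace AddMonoidHom

variable {E : Type*} [AddCommGroup E] [PartialOrder E] [Module ℝ E] [SMulPosMono ℝ E]

theorem map_smul_le_of_monotone (g : E →+ ℝ) (hg : Monotone g) {f : E} (hf : 0 ≤ f) (t : ℝ) :
    g (t • f) ≤ t * g f := by
  have hgf : 0 ≤ g f := map_zero g ▸ hg hf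
  refine le_mul_of_forall_lt_rat_imp_le_mul hgf fun s hs => ?_
  calc g (t • f) ≤ g ((s : ℝ) • f) := hg (smul_le_smul_of_nonneg_right hs.le hf)
    _ = s * g f := map_ratCast_smul g ℝ ℝ s f

theorem map_smul_of_monotone (g : E →+ ℝ) (hg : Monotone g) {f : E} (hf : 0 ≤ f) (t : ℝ) :
    g (t • f) = t * g f := by
  refine le_antisymm (g.map_smul_le_of_monotone hg hf t) ?_
  have h := g.map_smul_le_of_monotone hg hf (-t)
  rwa [neg_smul, map_neg, neg_mul, neg_le_neg_iff] at h

theorem map_smul_of_monotone_pi {Z : Type*} (T : E →+ (Z → ℝ)) (hT : Monotone T) {f : E}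
    (hf : 0 ≤ f) (t : ℝ) : T (t • f) = t • T f :=
  funext fun z =>
    ((Pi.evalAddMonoidHom (fun _ => ℝ) z).comp T).map_smul_of_monotone (fun _ _ h => hT h z) hf t

theorem map_le_smul_add_const_of_monotone {Z : Type*} (T : (Z → ℝ) →+ (Z → ℝ))
    (hT : Monotone T) (hconst : ∀ a : ℝ, T (fun _ => a) = fun _ => a) {V g : Z → ℝ}
    (hV : 0 ≤ V) {α β : ℝ} (hg : g ≤ α • V + fun _ => β) :
    T g ≤ α • T V + fun _ => β := by
  simpa only [map_add, hconst, T.map_smul_of_monotone_pi hT hV] using hT hg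

end AddMonoidHom

theorem rolling_horizon_stability_general {Z Q : Type*} [Fintype Q]
    (That : Q → (Z → ℝ) → (Z → ℝ))
    (hmono : ∀ (q : Q) (f g : Z → ℝ), (∀ z, f z ≤ g z) → ∀ z, That q f z ≤ That q g z)
    (hadd : ∀ (q : Q) (f g : Z → ℝ),
      That q (fun z => f z + g z) = fun z => That q f z + That q g z)
    (hconst : ∀ (q : Q) (a : ℝ), That q (fun _ => a) = fun _ => a)
    (c : Q → Z → ℝ)
    (fstar : Z → ℝ) (hfstar : ∀ z, 0 ≤ fstar z) (ϱ : ℝ)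
    (θ₁ θ₂ : ℝ) (hθ₁0 : 0 < θ₁) (hθ₁1 : θ₁ < 1)
    (hcost : ∀ z, θ₁ * fstar z - θ₂ ≤ ⨅ q, c q z)
    (ρ δ : ℝ) (hρ : ρ = 1 - θ₁) (hδ : δ = (ϱ + θ₂) / θ₁)
    (φ : ℕ → Z → ℝ)
    (hVI : ∀ n z, φ (n + 1) z = (⨅ q, (c q z + That q (φ n) z)) - ϱ)
    (qn : ℕ → Z → Q)
    (hqn : ∀ n z, c (qn n z) z + That (qn n z) (φ n) z =
      ⨅ q, (c q z + That q (φ n) z))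
    (hsandwich : ∀ n z, (1 - ρ ^ n) * (fstar z - δ) ≤ φ n z ∧ φ n z ≤ fstar z)
    (n : ℕ) (hn : Real.log θ₁ / Real.log (1 - θ₁) < (n : ℝ)) :
    ρ / (1 - ρ ^ n) < 1 ∧
    ∀ z, That (qn n z) fstar z ≤
      (ρ / (1 - ρ ^ n)) * fstar z + δ * (1 + (1 - ρ) / (1 - ρ ^ n)) := by
  have hρn : ρ ^ n < θ₁ := hρ ▸ pow_lt_of_log_div_log_lt (by linarith) (by linarith) hθ₁0 hn
  have hgap : 0 < 1 - ρ ^ n := by linarith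
  refine ⟨(div_lt_one hgap).2 (by linarith), fun z => ?_⟩
  set q := qn n z
  let T := AddMonoidHom.mk' (That q) (hadd q)
  have hstep : That q (φ n) z = φ (n + 1) z + ϱ - c q z := by linarith [hVI n z, hqn n z]
  have hcq : θ₁ * fstar z - θ₂ ≤ c q z := (hcost z).trans (ciInf_le (Finite.bddBelow_range _) q)
  have hsplit : That q fstar z = That q (φ n) z + That q (fstar - φ n) z := by
    simpa using congrFun (hadd q (φ n) (fstar - φ n)) z
  have htail : That q (fstar - φ n) z ≤ ρ ^ n * That q fstar z + (1 - ρ ^ n) * δ := by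
    refine T.map_le_smul_add_const_of_monotone (fun f g h => hmono q f g h) (hconst q) hfstar
      (fun z' => ?_) z
    simp only [Pi.sub_apply, Pi.add_apply, Pi.smul_apply, smul_eq_mul]
    linarith [(hsandwich n z').1]
  have hθδ : θ₁ * δ = ϱ + θ₂ := by rw [hδ]; field_simp
  have hkey : (1 - ρ ^ n) * That q fstar z ≤ ρ * fstar z + (1 - ρ) * δ + (1 - ρ ^ n) * δ := by
    subst hρ
    linarith [(hsandwich (n + 1) z).2]
  calc That q fstar z ≤ (ρ * fstar z + (1 - ρ) * δ + (1 - ρ ^ n) * δ) / (1 - ρ ^ n) := by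
        rw [le_div_iff₀ hgap]; linarith
    _ = ρ / (1 - ρ ^ n) * fstar z + δ * (1 + (1 - ρ) / (1 - ρ ^ n)) := by
        field_simp; ring

/-- stability of rolling-horizon policies. With `ρ = 1 − θ₁` and
the value-iteration bounds `(1−ρⁿ)(f* − δ) ≤ φ_n ≤ f*` (initialization
`φ₀ = 0`), if `n > log θ₁ / log(1−θ₁)`, then `ρ/(1−ρⁿ) < 1`, and the
stage-`n` minimizing selector `q_n` satisfies the Foster–Lyapunov drift
`𝒯̂_{q_n} f* ≤ (ρ/(1−ρⁿ)) f* + δ(1 + (1−ρ)/(1−ρⁿ))`. -/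
theorem rolling_horizon_stability {Z Q : Type*} [Fintype Q] [Nonempty Q]
    (That : Q → (Z → ℝ) → (Z → ℝ))
    (hmono : ∀ (q : Q) (f g : Z → ℝ), (∀ z, f z ≤ g z) → ∀ z, That q f z ≤ That q g z)
    (hadd : ∀ (q : Q) (f g : Z → ℝ),
      That q (fun z => f z + g z) = fun z => That q f z + That q g z)
    (hconst : ∀ (q : Q) (a : ℝ), That q (fun _ => a) = fun _ => a)
    (c : Q → Z → ℝ) (hc : ∀ q z, 0 ≤ c q z)
    (fstar : Z → ℝ) (hfstar : ∀ z, 0 ≤ fstar z) (ϱ : ℝ)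
    (hbellman : ∀ z, fstar z + ϱ = ⨅ q, (c q z + That q fstar z))
    (θ₁ θ₂ : ℝ) (hθ₁0 : 0 < θ₁) (hθ₁1 : θ₁ < 1) (hθ₂ : 0 ≤ θ₂)
    (hcost : ∀ z, θ₁ * fstar z - θ₂ ≤ ⨅ q, c q z)
    (ρ δ : ℝ) (hρ : ρ = 1 - θ₁) (hδ : δ = (ϱ + θ₂) / θ₁)
    (φ : ℕ → Z → ℝ) (hφ0 : ∀ z, φ 0 z = 0)
    (hVI : ∀ n z, φ (n + 1) z = (⨅ q, (c q z + That q (φ n) z)) - ϱ)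
    (qn : ℕ → Z → Q)
    (hqn : ∀ n z, c (qn n z) z + That (qn n z) (φ n) z =
      ⨅ q, (c q z + That q (φ n) z))
    (hsandwich : ∀ n z, (1 - ρ ^ n) * (fstar z - δ) ≤ φ n z ∧ φ n z ≤ fstar z)
    (n : ℕ) (hn : Real.log θ₁ / Real.log (1 - θ₁) < (n : ℝ)) :
    ρ / (1 - ρ ^ n) < 1 ∧
    ∀ z, That (qn n z) fstar z ≤
      (ρ / (1 - ρ ^ n)) * fstar z + δ * (1 + (1 - ρ) / (1 - ρ ^ n)) :=
  rolling_horizon_stability_general That hmono hadd hconst c fstar hfstar ϱ θ₁ θ₂ hθ₁0 hθ₁1 hcost ρ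
    δ hρ hδ φ hVI qn hqn hsandwich n hn
end

section
/- For the trace function, the difference of intermittent operators at loss rates λ ≤ λ′ is explicitly 𝒯̂_q^{λ} tr(Σ) − 𝒯̂_q^{λ′} tr(Σ) = −(λ′_q − λ_q) · tr(K_q(Σ) C_q Ξ(Σ)) ≤ 0, where K_q(Σ)C_qΞ(Σ) is positive semidefinite. -/
open Matrix

namespace Matrix.PosSemidef

lemma transpose_eq {n : Type*} {P : Matrix n n ℝ} (hP : P.PosSemidef) : Pᵀ = P := by
  simpa using hP.isHermitian.eq

variable {n k : Type*} [Fintype n] [Fintype k]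

lemma mul_mul_transpose_same_s14 {P : Matrix n n ℝ} (hP : P.PosSemidef) (B : Matrix k n ℝ) :
    (B * P * Bᵀ).PosSemidef := by
  simpa using hP.mul_mul_conjTranspose_same B

lemma mul_transpose_add_mul_mul_transpose {P : Matrix n n ℝ} (hP : P.PosSemidef)
    (D : Matrix n k ℝ) (A : Matrix n n ℝ) : (D * Dᵀ + A * P * Aᵀ).PosSemidef := by
  simpa using (posSemidef_self_mul_conjTranspose D).add (hP.mul_mul_transpose_same_s14 A)

variable [DecidableEq k]

lemma kalman_reduction {P : Matrix n n ℝ} (hP : P.PosSemidef) (C : Matrix k n ℝ)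
    {R : Matrix k k ℝ} (hR : R.PosDef) :
    (P * Cᵀ * (C * P * Cᵀ + R)⁻¹ * C * P).PosSemidef := by
  have hM : (C * P * Cᵀ + R).PosDef := PosDef.posSemidef_add (hP.mul_mul_transpose_same_s14 C) hR
  -- the reduction is the congruence `(P Cᵀ) M⁻¹ (P Cᵀ)ᵀ` of `M⁻¹`, using `Pᵀ = P`
  have h := hM.inv.posSemidef.mul_mul_transpose_same_s14 (P * Cᵀ)
  rwa [transpose_mul, transpose_transpose, hP.transpose_eq, ← Matrix.mul_assoc] at h

end Matrix.PosSemidef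

theorem loss_rate_trace_difference_general {Q : Type*} (d m p : ℕ)
    (A : Matrix (Fin d) (Fin d) ℝ) (D : Matrix (Fin d) (Fin m) ℝ)
    (C : Q → Matrix (Fin p) (Fin d) ℝ) (F : Q → Matrix (Fin p) (Fin m) ℝ)
    (hF : ∀ q, (F q * (F q)ᵀ).PosDef)
    (Xi : Matrix (Fin d) (Fin d) ℝ → Matrix (Fin d) (Fin d) ℝ)
    (hXi : ∀ S, Xi S = D * Dᵀ + A * S * Aᵀ)
    (K : Q → Matrix (Fin d) (Fin d) ℝ → Matrix (Fin d) (Fin p) ℝ)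
    (hK : ∀ q S, K q S = Xi S * (C q)ᵀ * (C q * Xi S * (C q)ᵀ + F q * (F q)ᵀ)⁻¹)
    (T : Q → Matrix (Fin d) (Fin d) ℝ → Matrix (Fin d) (Fin d) ℝ)
    (hT : ∀ q S, T q S = Xi S - K q S * C q * Xi S)
    (lam lam' : Q → ℝ)
    (hle : ∀ q, lam q ≤ lam' q)
    (q : Q) (S : Matrix (Fin d) (Fin d) ℝ) (hS : S.PosSemidef) :
    (K q S * C q * Xi S).PosSemidef ∧
    ((1 - lam q) * (T q S).trace + lam q * (Xi S).trace)
      - ((1 - lam' q) * (T q S).trace + lam' q * (Xi S).trace)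
      = -((lam' q - lam q) * (K q S * C q * Xi S).trace) ∧
    -((lam' q - lam q) * (K q S * C q * Xi S).trace) ≤ 0 := by
  have hXiS : (Xi S).PosSemidef := hXi S ▸ hS.mul_transpose_add_mul_mul_transpose D A
  have hpsd : (K q S * C q * Xi S).PosSemidef := hK q S ▸ hXiS.kalman_reduction (C q) (hF q)
  have htr : (T q S).trace = (Xi S).trace - (K q S * C q * Xi S).trace := by
    rw [hT, trace_sub]
  refine ⟨hpsd, by rw [htr]; ring, ?_⟩
  have hgap : 0 ≤ lam' q - lam q := sub_nonneg.mpr (hle q)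
  exact neg_nonpos.mpr (mul_nonneg hgap hpsd.trace_nonneg)

/-- for the trace function, the difference of intermittent
operators at loss rates `λ ≤ λ'` is explicitly
`𝒯̂_q^λ tr(S) − 𝒯̂_q^{λ'} tr(S) = −(λ'_q − λ_q)·tr(K_q(S) C_q Ξ(S)) ≤ 0`,
where `K_q(S)C_qΞ(S) = Ξ(S)C_qᵀ(C_qΞ(S)C_qᵀ + F_qF_qᵀ)⁻¹C_qΞ(S)` is positive
semidefinite. -/
theorem loss_rate_trace_difference {Q : Type*} (d m p : ℕ)
    (A : Matrix (Fin d) (Fin d) ℝ) (D : Matrix (Fin d) (Fin m) ℝ)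
    (C : Q → Matrix (Fin p) (Fin d) ℝ) (F : Q → Matrix (Fin p) (Fin m) ℝ)
    (hF : ∀ q, (F q * (F q)ᵀ).PosDef) (hDF : ∀ q, D * (F q)ᵀ = 0)
    (Xi : Matrix (Fin d) (Fin d) ℝ → Matrix (Fin d) (Fin d) ℝ)
    (hXi : ∀ S, Xi S = D * Dᵀ + A * S * Aᵀ)
    (K : Q → Matrix (Fin d) (Fin d) ℝ → Matrix (Fin d) (Fin p) ℝ)
    (hK : ∀ q S, K q S = Xi S * (C q)ᵀ * (C q * Xi S * (C q)ᵀ + F q * (F q)ᵀ)⁻¹)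
    (T : Q → Matrix (Fin d) (Fin d) ℝ → Matrix (Fin d) (Fin d) ℝ)
    (hT : ∀ q S, T q S = Xi S - K q S * C q * Xi S)
    (lam lam' : Q → ℝ)
    (hlam0 : ∀ q, 0 ≤ lam q) (hlam1 : ∀ q, lam' q ≤ 1)
    (hle : ∀ q, lam q ≤ lam' q)
    (q : Q) (S : Matrix (Fin d) (Fin d) ℝ) (hS : S.PosSemidef) :
    (K q S * C q * Xi S).PosSemidef ∧
    ((1 - lam q) * (T q S).trace + lam q * (Xi S).trace)
      - ((1 - lam' q) * (T q S).trace + lam' q * (Xi S).trace)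
      = -((lam' q - lam q) * (K q S * C q * Xi S).trace) ∧
    -((lam' q - lam q) * (K q S * C q * Xi S).trace) ≤ 0 :=
  loss_rate_trace_difference_general d m p A D C F hF Xi hXi K hK T hT lam lam' hle q S hS
end

section
/- Scalar intermittent Kalman recursion drift: let a > 1, f > 0, λ ∈ [0, 1/a²), and define on ℝ₊² the maps T₁(ξ) = (f²(1+a²ξ₁)/(1+a²ξ₁+f²), 1+a²ξ₂) and the no-observation map Ξ(ξ) = (1+a²ξ₁, 1+a²ξ₂). Then for any ε ∈ (0,1) with ε₀ := (ε/(1−ε) + λ)a² < 1, the function 𝒱_ε(ξ) = ε ξ₁ + (1−ε) ξ₂ if ξ₁ ≥ ξ₂, and (1−ε)ξ₁ + ε ξ₂ otherwise, satisfies (1−λ)𝒱_ε(T₁(ξ)) + λ 𝒱_ε(Ξ(ξ)) ≤ C₀ + ε₀ 𝒱_ε(ξ) for all ξ with f² ≤ ξ₂ ≤ ξ₁, for some constant C₀ depending only on ε, λ, f, a. -/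
/-!
On `f² ≤ ξ₂ ≤ ξ₁` the order of the coordinates is the same after every step: a received
observation of sensor 1 pushes `ξ₁` to at most `f² ≤ ξ₂ < 1 + a² ξ₂`, while the lost observation applies the same
increasing affine map to both coordinates. Hence `𝒱_ε` is affine along both branches. The lost
branch multiplies `𝒱_ε` by `a²` up to a constant, and the received branch costs, up to a constant,
only `ε a² ξ₂ ≤ ε / (1 - ε) · a² 𝒱_ε(ξ)`.
-/

lemma mul_div_add_le {c u : ℝ} (hc : 0 ≤ c) (hu : 0 ≤ u) : c * u / (u + c) ≤ c :=
  div_le_of_le_mul₀ (by positivity) hc (by nlinarith)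

/-- The Lyapunov function `𝒱_ε` of the paper. -/
noncomputable def lyap (ε x y : ℝ) : ℝ :=
  if y ≤ x then ε * x + (1 - ε) * y else (1 - ε) * x + ε * y

namespace lyap

variable {ε x y : ℝ}

lemma of_le (h : y ≤ x) : lyap ε x y = ε * x + (1 - ε) * y := if_pos h

lemma of_lt (h : x < y) : lyap ε x y = (1 - ε) * x + ε * y := if_neg h.not_ge

lemma affine_of_le (b : ℝ) {c : ℝ} (hc : 0 ≤ c) (h : y ≤ x) :
    lyap ε (b + c * x) (b + c * y) = b + c * lyap ε x y := by
  rw [of_le h, of_le (by gcongr)]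
  ring

lemma mul_snd_le_of_le (hε0 : 0 ≤ ε) (hε1 : ε < 1) (hx : 0 ≤ x) (h : y ≤ x) :
    ε * y ≤ ε / (1 - ε) * lyap ε x y := by
  have hε : ε / (1 - ε) * (1 - ε) = ε := div_mul_cancel₀ ε (by linarith)
  have : 0 ≤ ε / (1 - ε) * (ε * x) := by
    have := div_nonneg hε0 (sub_nonneg.2 hε1.le)
    positivity
  rw [of_le h]
  nlinarith

lemma kalmanUpdate_le {a f : ℝ} (hε1 : ε ≤ 1) (ha : 1 ≤ a ^ 2) (hx : 0 ≤ x) (hy : f ^ 2 ≤ y) :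
    lyap ε (f ^ 2 * (1 + a ^ 2 * x) / (1 + a ^ 2 * x + f ^ 2)) (1 + a ^ 2 * y)
      ≤ (1 - ε) * f ^ 2 + ε * (1 + a ^ 2 * y) := by
  have hG : f ^ 2 * (1 + a ^ 2 * x) / (1 + a ^ 2 * x + f ^ 2) ≤ f ^ 2 :=
    mul_div_add_le (sq_nonneg f) (by positivity)
  rw [of_lt (by nlinarith [sq_nonneg f])]
  gcongr

end lyap

theorem scalar_intermittent_drift_general
    (a f lam ε ε₀ : ℝ)
    (ha : 1 < a) (hlam0 : 0 ≤ lam) (hlam1 : lam < 1 / a ^ 2)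
    (hε0 : 0 < ε) (hε1 : ε < 1)
    (hε₀ : ε₀ = (ε / (1 - ε) + lam) * a ^ 2)
    (V : ℝ → ℝ → ℝ)
    (hV : ∀ x y : ℝ, V x y = if y ≤ x then ε * x + (1 - ε) * y
      else (1 - ε) * x + ε * y)
    (T₁ Xi : ℝ → ℝ → ℝ × ℝ)
    (hT₁ : ∀ x y, T₁ x y =
      (f ^ 2 * (1 + a ^ 2 * x) / (1 + a ^ 2 * x + f ^ 2), 1 + a ^ 2 * y))
    (hXi : ∀ x y, Xi x y = (1 + a ^ 2 * x, 1 + a ^ 2 * y)) :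
    ∃ C₀ : ℝ, ∀ x y : ℝ, f ^ 2 ≤ y → y ≤ x →
      (1 - lam) * V (T₁ x y).1 (T₁ x y).2 + lam * V (Xi x y).1 (Xi x y).2
        ≤ C₀ + ε₀ * V x y := by
  obtain rfl : V = lyap ε := funext₂ hV
  refine ⟨(1 - lam) * ((1 - ε) * f ^ 2 + ε) + lam, fun x y hy hxy => ?_⟩
  have ha2 : 1 ≤ a ^ 2 := one_le_pow₀ ha.le
  have hlam : lam ≤ 1 := hlam1.le.trans (div_le_one_of_le₀ ha2 (by positivity))
  have hy0 : 0 ≤ y := (sq_nonneg f).trans hy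
  have hx0 : 0 ≤ x := hy0.trans hxy
  have received := lyap.kalmanUpdate_le hε1.le ha2 hx0 hy
  have lost := lyap.affine_of_le (ε := ε) 1 (by positivity : 0 ≤ a ^ 2) hxy
  have key := lyap.mul_snd_le_of_le hε0.le hε1 hx0 hxy
  rw [hT₁, hXi, hε₀, lost]
  nlinarith [mul_le_mul_of_nonneg_left received (sub_nonneg.2 hlam),
    mul_le_mul_of_nonneg_left key (by positivity : 0 ≤ a ^ 2),
    mul_nonneg hlam0 (mul_nonneg hε0.le (mul_nonneg (sq_nonneg a) hy0))]

/-- scalar intermittent Kalman drift. With `a > 1`, `f > 0`,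
`λ ∈ [0, 1/a²)`, `ε ∈ (0,1)` such that `ε₀ = (ε/(1−ε) + λ)a² < 1`, the
function `𝒱_ε(ξ) = εξ₁ + (1−ε)ξ₂` if `ξ₁ ≥ ξ₂` (else with weights swapped)
satisfies `(1−λ)𝒱_ε(T₁(ξ)) + λ𝒱_ε(Ξ(ξ)) ≤ C₀ + ε₀ 𝒱_ε(ξ)` for all
`f² ≤ ξ₂ ≤ ξ₁`, for some constant `C₀`. -/
theorem scalar_intermittent_drift
    (a f lam ε ε₀ : ℝ)
    (ha : 1 < a) (hf : 0 < f) (hlam0 : 0 ≤ lam) (hlam1 : lam < 1 / a ^ 2)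
    (hε0 : 0 < ε) (hε1 : ε < 1)
    (hε₀ : ε₀ = (ε / (1 - ε) + lam) * a ^ 2) (hε₀1 : ε₀ < 1)
    (V : ℝ → ℝ → ℝ)
    (hV : ∀ x y : ℝ, V x y = if y ≤ x then ε * x + (1 - ε) * y
      else (1 - ε) * x + ε * y)
    (T₁ Xi : ℝ → ℝ → ℝ × ℝ)
    (hT₁ : ∀ x y, T₁ x y =
      (f ^ 2 * (1 + a ^ 2 * x) / (1 + a ^ 2 * x + f ^ 2), 1 + a ^ 2 * y))
    (hXi : ∀ x y, Xi x y = (1 + a ^ 2 * x, 1 + a ^ 2 * y)) :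
    ∃ C₀ : ℝ, ∀ x y : ℝ, f ^ 2 ≤ y → y ≤ x →
      (1 - lam) * V (T₁ x y).1 (T₁ x y).2 + lam * V (Xi x y).1 (Xi x y).2
        ≤ C₀ + ε₀ * V x y :=
  scalar_intermittent_drift_general a f lam ε ε₀ ha hlam0 hlam1 hε0 hε1 hε₀ V hV T₁ Xi hT₁ hXi
end

section
/- Uniqueness of Bellman solutions in the discounted problem: let α ∈ (0,1), c_q ≥ tr(Π̃ ·) be nonnegative running costs, and suppose f* is a nonnegative lower semicontinuous solution of f*(z) = min_q{c_q(z) + α 𝒯̂_q f*(z)} satisfying f*(s,Σ) ≤ κ(1 + tr(Π̃ Σ)), and equals the optimal discounted value sup-achieving representation f*(z) = inf over admissible query sequences of Σ_{t≥0} αᵗ E[c_{Q_t}(Z_t)]. If V is any other nonnegative lsc function satisfying the same equation and growth bound V(s,Σ) ≤ κ′(1 + tr(Π̃Σ)), then V = f*. -/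
/-!
Since `Q` is finite, both `f*` and `V` attain the minimum in the Bellman equation along stationary
selectors `σf`, `σV`. Iterating `V ≤ c_σ + α 𝒯̂_σ V` along `σ = σf` gives
`V ≤ ∑_{t<n} αᵗ 𝒯̂_σᵗ c_σ + αⁿ 𝒯̂_σⁿ V`, and the linear growth of `V` bounds the tail by
`κ' αⁿ (1 + 𝒯̂_σⁿ c_σ)`, which vanishes because the discounted cost of `σf` is at most `f* < ∞`;
hence `V ≤ f*`. Conversely, iterating the equation for `V ≥ 0` along `σV` shows that this
stationary policy costs at most `V`, so `f* ≤ V` by the optimality of `f*`.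
-/

open Matrix

/-- `n`-step expectation operator under a (time-varying Markov) policy `π`:
`expOp That π n h = 𝒯̂_{π 0} (𝒯̂_{π 1} ⋯ (𝒯̂_{π (n−1)} h))`. -/
def expOp {Z Q : Type*} (That : Q → (Z → ℝ) → (Z → ℝ)) :
    (ℕ → Z → Q) → ℕ → (Z → ℝ) → (Z → ℝ)
  | _, 0, h => h
  | π, n + 1, h => fun z =>
      That (π 0 z) (expOp That (fun k => π (k + 1)) n h) z

open Finset Filter Topology

lemma Matrix.PosSemidef.trace_mul_nonneg {n : Type*} [Fintype n] [DecidableEq n]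
    {A B : Matrix n n ℝ} (hA : A.PosSemidef) (hB : B.PosSemidef) : 0 ≤ (A * B).trace := by
  open scoped MatrixOrder in
  obtain ⟨S, hS, rfl⟩ : ∃ S : Matrix n n ℝ, S.PosSemidef ∧ S * S = A :=
    ⟨CFC.sqrt A, nonneg_iff_posSemidef.mp (CFC.sqrt_nonneg A),
      CFC.sqrt_mul_sqrt_self A (nonneg_iff_posSemidef.mpr hA)⟩
  have hSBS : (S * B * Sᴴ).PosSemidef := hB.mul_mul_conjTranspose_same S
  rw [hS.isHermitian.eq] at hSBS
  rw [mul_assoc, trace_mul_comm]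
  exact hSBS.trace_nonneg

namespace Module.End

variable {R M : Type*} [CommRing R] [AddCommGroup M] [Module R M]

def discountedSum (T : Module.End R M) (α : R) (n : ℕ) : Module.End R M :=
  ∑ t ∈ range n, α ^ t • T ^ t

lemma discountedSum_apply (T : Module.End R M) (α : R) (n : ℕ) (f : M) :
    T.discountedSum α n f = ∑ t ∈ range n, α ^ t • (T ^ t) f := by
  simp [discountedSum, LinearMap.sum_apply]

lemma discountedSum_sub_add_pow (T : Module.End R M) (α : R) (n : ℕ) (f : M) :
    T.discountedSum α n (f - α • T f) + α ^ n • (T ^ n) f = f := by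
  have hstep : ∀ t, α ^ t • (T ^ t) (f - α • T f)
      = α ^ t • (T ^ t) f - α ^ (t + 1) • (T ^ (t + 1)) f := fun t => by
    rw [map_sub, map_smul, pow_succ, pow_succ, mul_apply, smul_sub, mul_smul]
  rw [discountedSum_apply, sum_congr rfl fun t _ => hstep t, sum_range_sub']
  simp

variable {Z : Type*}

lemma discountedSum_apply_apply (T : Module.End ℝ (Z → ℝ)) (α : ℝ) (n : ℕ) (f : Z → ℝ)
    (z : Z) : T.discountedSum α n f z = ∑ t ∈ range n, α ^ t * (T ^ t) f z := by
  simp [discountedSum_apply]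

structure IsMarkov (T : Module.End ℝ (Z → ℝ)) : Prop where
  monotone : Monotone T
  map_one : T 1 = 1

namespace IsMarkov

variable {T S : Module.End ℝ (Z → ℝ)} {α : ℝ} {f g : Z → ℝ}

lemma nonneg (hT : T.IsMarkov) (hf : 0 ≤ f) : 0 ≤ T f := by
  simpa using hT.monotone hf

lemma mul (hT : T.IsMarkov) (hS : S.IsMarkov) : (T * S).IsMarkov :=
  ⟨hT.monotone.comp hS.monotone, by rw [mul_apply, hS.map_one, hT.map_one]⟩

lemma pow (hT : T.IsMarkov) (n : ℕ) : (T ^ n).IsMarkov := by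
  induction n with
  | zero => exact ⟨monotone_id, rfl⟩
  | succ n ih => rw [pow_succ]; exact ih.mul hT

lemma monotone_discountedSum (hT : T.IsMarkov) (hα : 0 ≤ α) (n : ℕ) :
    Monotone (T.discountedSum α n) := fun f g hfg => by
  simp only [discountedSum_apply]
  exact sum_le_sum fun t _ => smul_le_smul_of_nonneg_left ((hT.pow t).monotone hfg)
    (pow_nonneg hα t)

lemma le_discountedSum_add_pow (hT : T.IsMarkov) (hα : 0 ≤ α) (hf : f ≤ g + α • T f)
    (n : ℕ) : f ≤ T.discountedSum α n g + α ^ n • (T ^ n) f := by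
  conv_lhs => rw [← T.discountedSum_sub_add_pow α n f]
  gcongr
  exact hT.monotone_discountedSum hα n (sub_le_iff_le_add.mpr hf)

lemma discountedSum_le (hT : T.IsMarkov) (hα : 0 ≤ α) (hf : f = g + α • T f) (hf0 : 0 ≤ f)
    (n : ℕ) : T.discountedSum α n g ≤ f := by
  have htail : 0 ≤ α ^ n • (T ^ n) f := smul_nonneg (pow_nonneg hα n) ((hT.pow n).nonneg hf0)
  calc T.discountedSum α n g ≤ T.discountedSum α n g + α ^ n • (T ^ n) f :=
        le_add_of_nonneg_right htail
    _ = f := by rw [eq_sub_of_add_eq hf.symm, T.discountedSum_sub_add_pow]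

lemma discountedTerm_nonneg (hT : T.IsMarkov) (hα : 0 ≤ α) (hg : 0 ≤ g) (z : Z) (t : ℕ) :
    0 ≤ α ^ t * (T ^ t) g z :=
  mul_nonneg (pow_nonneg hα t) ((hT.pow t).nonneg hg z)

lemma summable_discounted_of_bellman (hT : T.IsMarkov) (hα : 0 ≤ α) (hg : 0 ≤ g)
    (hf : f = g + α • T f) (hf0 : 0 ≤ f) (z : Z) :
    Summable fun t => α ^ t * (T ^ t) g z :=
  summable_of_sum_range_le (hT.discountedTerm_nonneg hα hg z) fun n => by
    simpa [discountedSum_apply_apply] using hT.discountedSum_le hα hf hf0 n z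

lemma tsum_discounted_le_of_bellman (hT : T.IsMarkov) (hα : 0 ≤ α) (hg : 0 ≤ g)
    (hf : f = g + α • T f) (hf0 : 0 ≤ f) (z : Z) :
    ∑' t, α ^ t * (T ^ t) g z ≤ f z :=
  Real.tsum_le_of_sum_range_le (hT.discountedTerm_nonneg hα hg z) fun n => by
    simpa [discountedSum_apply_apply] using hT.discountedSum_le hα hf hf0 n z

lemma le_tsum_discounted_of_bellman_le (hT : T.IsMarkov) (hα0 : 0 ≤ α) (hα1 : α < 1) {K : ℝ}
    (hf : f ≤ g + α • T f) (hgrowth : f ≤ K • (1 + g)) (z : Z)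
    (hsum : Summable fun t => α ^ t * (T ^ t) g z) :
    f z ≤ ∑' t, α ^ t * (T ^ t) g z := by
  have hbound : ∀ n, f z ≤ (∑ t ∈ range n, α ^ t * (T ^ t) g z)
      + (K * α ^ n + K * (α ^ n * (T ^ n) g z)) := by
    intro n
    have hiter := hT.le_discountedSum_add_pow hα0 hf n z
    have htail : (T ^ n) f z ≤ K + K * (T ^ n) g z := by
      simpa [(hT.pow n).map_one, mul_add] using (hT.pow n).monotone hgrowth z
    simp only [Pi.add_apply, Pi.smul_apply, smul_eq_mul, discountedSum_apply_apply] at hiter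
    nlinarith [mul_le_mul_of_nonneg_left htail (pow_nonneg hα0 n)]
  have hlim : Tendsto (fun n => (∑ t ∈ range n, α ^ t * (T ^ t) g z)
      + (K * α ^ n + K * (α ^ n * (T ^ n) g z))) atTop
      (𝓝 ((∑' t, α ^ t * (T ^ t) g z) + (K * 0 + K * 0))) :=
    hsum.hasSum.tendsto_sum_nat.add
      (((tendsto_pow_atTop_nhds_zero_of_lt_one hα0 hα1).const_mul K).add
        (hsum.tendsto_atTop_zero.const_mul K))
  simpa using ge_of_tendsto' hlim hbound

end IsMarkov

end Module.End

section Policy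

variable {Z Q : Type*}

def policyOperator (T : Q → Module.End ℝ (Z → ℝ)) (σ : Z → Q) : Module.End ℝ (Z → ℝ) where
  toFun f z := T (σ z) f z
  map_add' f g := by ext z; simp
  map_smul' r f := by ext z; simp

@[simp]
lemma policyOperator_apply (T : Q → Module.End ℝ (Z → ℝ)) (σ : Z → Q) (f : Z → ℝ) (z : Z) :
    policyOperator T σ f z = T (σ z) f z :=
  rfl

lemma Module.End.IsMarkov.policyOperator {T : Q → Module.End ℝ (Z → ℝ)}
    (hT : ∀ q, (T q).IsMarkov) (σ : Z → Q) : (policyOperator T σ).IsMarkov :=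
  ⟨fun _ _ hfg z => (hT (σ z)).monotone hfg z, by ext z; simp [(hT _).map_one]⟩

lemma expOp_const_eq_pow (T : Q → Module.End ℝ (Z → ℝ)) (σ : Z → Q) (n : ℕ) (h : Z → ℝ) :
    expOp (fun q => T q) (fun _ => σ) n h = (policyOperator T σ ^ n) h := by
  induction n with
  | zero => rfl
  | succ n ih => rw [pow_succ', Module.End.mul_apply, ← ih]; rfl

lemma expOp_nonneg {T : Q → Module.End ℝ (Z → ℝ)} (hT : ∀ q, (T q).IsMarkov)
    (π : ℕ → Z → Q) (n : ℕ) {h : Z → ℝ} (hh : 0 ≤ h) : 0 ≤ expOp (fun q => T q) π n h := by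
  induction n generalizing π with
  | zero => exact hh
  | succ n ih => exact fun z => (hT _).nonneg (ih _) z

lemma exists_selector_of_eq_iInf [Finite Q] [Nonempty Q] {F : Q → Z → ℝ} {f : Z → ℝ}
    (hf : ∀ z, f z = ⨅ q, F q z) : ∃ σ : Z → Q, ∀ z, f z = F (σ z) z := by
  choose σ hσ using fun z => exists_eq_ciInf_of_finite (f := fun q => F q z)
  exact ⟨σ, fun z => (hf z).trans (hσ z).symm⟩

noncomputable def discountedCost (T : Q → Module.End ℝ (Z → ℝ)) (c : Q → Z → ℝ) (α : ℝ)
    (π : ℕ → Z → Q) (z : Z) : ℝ :=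
  ∑' t, α ^ t * expOp (fun q => T q) π t (fun w => c (π t w) w) z

variable {T : Q → Module.End ℝ (Z → ℝ)} {c : Q → Z → ℝ} {α : ℝ}

lemma discountedCost_nonneg (hT : ∀ q, (T q).IsMarkov) (hα : 0 ≤ α) (hc : ∀ q, 0 ≤ c q)
    (π : ℕ → Z → Q) (z : Z) : 0 ≤ discountedCost T c α π z :=
  tsum_nonneg fun t => mul_nonneg (pow_nonneg hα t) (expOp_nonneg hT π t (fun w => hc _ w) z)

lemma discountedCost_const (T : Q → Module.End ℝ (Z → ℝ)) (c : Q → Z → ℝ) (α : ℝ) (σ : Z → Q)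
    (z : Z) : discountedCost T c α (fun _ => σ) z
      = ∑' t, α ^ t * (policyOperator T σ ^ t) (fun w => c (σ w) w) z :=
  tsum_congr fun t => congrArg (α ^ t * ·) (congrFun (expOp_const_eq_pow T σ t _) z)

lemma le_of_bellman_le_of_eq (hT : ∀ q, (T q).IsMarkov) (hα0 : 0 ≤ α) (hα1 : α < 1)
    (hc : ∀ q, 0 ≤ c q) {σ : Z → Q} {f V : Z → ℝ}
    (hf : ∀ z, f z = c (σ z) z + α * T (σ z) f z) (hf0 : 0 ≤ f)
    (hV : ∀ q z, V z ≤ c q z + α * T q V z) {K : ℝ} (hgrowth : ∀ q, V ≤ K • (1 + c q)) :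
    V ≤ f := fun z => by
  have hP := Module.End.IsMarkov.policyOperator hT σ
  have hfσ : f = (fun w => c (σ w) w) + α • policyOperator T σ f := funext hf
  have hcσ : 0 ≤ fun w => c (σ w) w := fun w => hc (σ w) w
  calc V z ≤ ∑' t, α ^ t * (policyOperator T σ ^ t) (fun w => c (σ w) w) z :=
        hP.le_tsum_discounted_of_bellman_le hα0 hα1 (fun w => hV (σ w) w)
          (fun w => hgrowth (σ w) w) z (hP.summable_discounted_of_bellman hα0 hcσ hfσ hf0 z)
    _ ≤ f z := hP.tsum_discounted_le_of_bellman hα0 hcσ hfσ hf0 z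

lemma iInf_discountedCost_le [Nonempty Q] (hT : ∀ q, (T q).IsMarkov) (hα : 0 ≤ α)
    (hc : ∀ q, 0 ≤ c q) {σ : Z → Q} {V : Z → ℝ}
    (hV : ∀ z, V z = c (σ z) z + α * T (σ z) V z) (hV0 : 0 ≤ V) (z : Z) :
    ⨅ π, discountedCost T c α π z ≤ V z := by
  have hP := Module.End.IsMarkov.policyOperator hT σ
  calc ⨅ π, discountedCost T c α π z ≤ discountedCost T c α (fun _ => σ) z :=
        ciInf_le ⟨0, by rintro _ ⟨π, rfl⟩; exact discountedCost_nonneg hT hα hc π z⟩ _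
    _ = ∑' t, α ^ t * (policyOperator T σ ^ t) (fun w => c (σ w) w) z :=
        discountedCost_const T c α σ z
    _ ≤ V z := hP.tsum_discounted_le_of_bellman hα (fun w => hc (σ w) w) (funext hV) hV0 z

end Policy

theorem discounted_bellman_uniqueness_general
    {𝕊 Q : Type*}
    [Fintype Q] [Nonempty Q] (d : ℕ)
    (That : Q → ((𝕊 × {M : Matrix (Fin d) (Fin d) ℝ // M.PosSemidef}) → ℝ) →
      ((𝕊 × {M : Matrix (Fin d) (Fin d) ℝ // M.PosSemidef}) → ℝ))
    (hmono : ∀ (q : Q) f g, (∀ z, f z ≤ g z) → ∀ z, That q f z ≤ That q g z)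
    (hadd : ∀ (q : Q) f g,
      That q (fun z => f z + g z) = fun z => That q f z + That q g z)
    (hhom : ∀ (q : Q) f (r : ℝ), That q (fun z => r * f z) = fun z => r * That q f z)
    (hone : ∀ q : Q, That q (fun _ => (1 : ℝ)) = fun _ => (1 : ℝ))
    (α : ℝ) (hα0 : 0 < α) (hα1 : α < 1)
    (Rnet : 𝕊 → Q → ℝ) (hRnet : ∀ s q, 0 ≤ Rnet s q)
    (Pit : Matrix (Fin d) (Fin d) ℝ) (hPit : Pit.PosSemidef)
    (c : Q → (𝕊 × {M : Matrix (Fin d) (Fin d) ℝ // M.PosSemidef}) → ℝ)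
    (hc : ∀ q z, c q z = Rnet z.1 q + (Pit * z.2.val).trace)
    (fstar : (𝕊 × {M : Matrix (Fin d) (Fin d) ℝ // M.PosSemidef}) → ℝ)
    (hfpos : ∀ z, 0 ≤ fstar z)
    (hfbellman : ∀ z, fstar z = ⨅ q, (c q z + α * That q fstar z))
    (hfopt : ∀ z, fstar z =
      ⨅ π : ℕ → (𝕊 × {M : Matrix (Fin d) (Fin d) ℝ // M.PosSemidef}) → Q,
        ∑' t : ℕ, α ^ t * expOp That π t (fun w => c (π t w) w) z)
    (V : (𝕊 × {M : Matrix (Fin d) (Fin d) ℝ // M.PosSemidef}) → ℝ)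
    (hVpos : ∀ z, 0 ≤ V z)
    (κ' : ℝ)
    (hVgrowth : ∀ z, V z ≤ κ' * (1 + (Pit * z.2.val).trace))
    (hVbellman : ∀ z, V z = ⨅ q, (c q z + α * That q V z)) :
    V = fstar := by
  let T : Q → Module.End ℝ _ := fun q =>
    { toFun := That q, map_add' := hadd q, map_smul' := fun r f => hhom q f r }
  have hT : ∀ q, (T q).IsMarkov := fun q => ⟨fun f g hfg => hmono q f g hfg, hone q⟩
  have hc0 : ∀ q, 0 ≤ c q := fun q z => by
    rw [hc]; exact add_nonneg (hRnet _ _) (hPit.trace_mul_nonneg z.2.2)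
  have hVc : ∀ q, V ≤ max κ' 0 • (1 + c q) := fun q z => by
    have htr0 := hPit.trace_mul_nonneg z.2.2
    have htr : (Pit * z.2.val).trace ≤ c q z := by
      rw [hc]; exact le_add_of_nonneg_left (hRnet _ _)
    simp only [Pi.smul_apply, Pi.add_apply, Pi.one_apply, smul_eq_mul]
    nlinarith [hVgrowth z, le_max_left κ' 0, le_max_right κ' 0]
  obtain ⟨σf, hσf⟩ := exists_selector_of_eq_iInf hfbellman
  obtain ⟨σV, hσV⟩ := exists_selector_of_eq_iInf hVbellman
  funext z
  apply le_antisymm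
  · exact le_of_bellman_le_of_eq hT hα0.le hα1 hc0 hσf hfpos
      (fun q w => (hVbellman w).trans_le (ciInf_le (Finite.bddBelow_range _) q)) hVc z
  · exact (hfopt z).trans_le (iInf_discountedCost_le hT hα0.le hc0 hσV hVpos z)

/-- uniqueness of nonnegative lsc solutions with at most linear
growth of the discounted Bellman equation
`f*(z) = min_q {c_q(z) + α 𝒯̂_q f*(z)}`, where
`c_q(s,S) = R_net(s,q) + tr(Π̃ S) ≥ 0`, and `f*` is the optimal discounted
value `f*(z) = inf_π ∑_t αᵗ E^π_z[c_{Q_t}(Z_t)]`. Any other nonnegative lsc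
solution `V` with growth `V(s,S) ≤ κ'(1 + tr(Π̃S))` equals `f*`. -/
theorem discounted_bellman_uniqueness
    {𝕊 Q : Type*} [Fintype 𝕊] [Nonempty 𝕊] [TopologicalSpace 𝕊]
    [Fintype Q] [Nonempty Q] (d : ℕ)
    (That : Q → ((𝕊 × {M : Matrix (Fin d) (Fin d) ℝ // M.PosSemidef}) → ℝ) →
      ((𝕊 × {M : Matrix (Fin d) (Fin d) ℝ // M.PosSemidef}) → ℝ))
    (hmono : ∀ (q : Q) f g, (∀ z, f z ≤ g z) → ∀ z, That q f z ≤ That q g z)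
    (hadd : ∀ (q : Q) f g,
      That q (fun z => f z + g z) = fun z => That q f z + That q g z)
    (hhom : ∀ (q : Q) f (r : ℝ), That q (fun z => r * f z) = fun z => r * That q f z)
    (hone : ∀ q : Q, That q (fun _ => (1 : ℝ)) = fun _ => (1 : ℝ))
    (α : ℝ) (hα0 : 0 < α) (hα1 : α < 1)
    (Rnet : 𝕊 → Q → ℝ) (hRnet : ∀ s q, 0 ≤ Rnet s q)
    (Pit : Matrix (Fin d) (Fin d) ℝ) (hPit : Pit.PosSemidef)
    (c : Q → (𝕊 × {M : Matrix (Fin d) (Fin d) ℝ // M.PosSemidef}) → ℝ)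
    (hc : ∀ q z, c q z = Rnet z.1 q + (Pit * z.2.val).trace)
    (fstar : (𝕊 × {M : Matrix (Fin d) (Fin d) ℝ // M.PosSemidef}) → ℝ)
    (hfpos : ∀ z, 0 ≤ fstar z) (hflsc : LowerSemicontinuous fstar)
    (κ : ℝ)
    (hfgrowth : ∀ z, fstar z ≤ κ * (1 + (Pit * z.2.val).trace))
    (hfbellman : ∀ z, fstar z = ⨅ q, (c q z + α * That q fstar z))
    (hfopt : ∀ z, fstar z =
      ⨅ π : ℕ → (𝕊 × {M : Matrix (Fin d) (Fin d) ℝ // M.PosSemidef}) → Q,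
        ∑' t : ℕ, α ^ t * expOp That π t (fun w => c (π t w) w) z)
    (V : (𝕊 × {M : Matrix (Fin d) (Fin d) ℝ // M.PosSemidef}) → ℝ)
    (hVpos : ∀ z, 0 ≤ V z) (hVlsc : LowerSemicontinuous V)
    (κ' : ℝ)
    (hVgrowth : ∀ z, V z ≤ κ' * (1 + (Pit * z.2.val).trace))
    (hVbellman : ∀ z, V z = ⨅ q, (c q z + α * That q V z)) :
    V = fstar :=
  discounted_bellman_uniqueness_general d That hmono hadd hhom hone α hα0 hα1 Rnet hRnet Pit hPit c
    hc fstar hfpos hfbellman hfopt V hVpos κ' hVgrowth hVbellman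
end
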